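/- arXiv:1409.3137 — 5 statements merged into one kernel-verified Lean document; each statement's English description precedes it below -/
import Mathlib

section
/- Let x_1, …, x_n be pairwise distinct complex numbers satisfying |x_i − x_j| ≥ ζ > 0 for i ≠ j, let ℓ_1, …, ℓ_n be positive integers with N = ℓ_1 + ⋯ + ℓ_n, and for fixed j define h_j(x) = Π_{i≠j} (x − x_i)^{−ℓ_i}. Then for every natural number k, |h_j^{(k)}(x_j)| ≤ N(N+1)⋯(N+k−1) · ζ^{−N−k+ℓ_j}. -/
/-!
Differentiating `∏ i, (w - a i) ^ (-m i)` gives `∑ i, -m i` times the same kind of product with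
`m i` raised by one, so the total order `S = ∑ m i` grows by one while the norms of the
coefficients sum to at most `S`. Induction on `k` then bounds the `k`-th derivative at a point `ζ`-separated from
all the `a i` by `S (S + 1) ⋯ (S + k - 1) ζ ^ (-S - k)`; for `h_j` we have `S = N - ℓ_j ≤ N`.
-/

open Finset Filter Topology

noncomputable def poleProd {𝕜 ι : Type*} [Field 𝕜] (T : Finset ι) (a : ι → 𝕜) (m : ι → ℕ)
    (w : 𝕜) : 𝕜 :=
  ∏ i ∈ T, ((w - a i) ^ m i)⁻¹

section PoleProd

variable {𝕜 ι : Type*} [NontriviallyNormedField 𝕜] (T : Finset ι) (a : ι → 𝕜) (m : ι → ℕ)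
  {z : 𝕜}

lemma hasDerivAt_inv_sub_pow {b : 𝕜} (hz : z ≠ b) (p : ℕ) :
    HasDerivAt (fun w => ((w - b) ^ p)⁻¹) (-(p : 𝕜) * ((z - b) ^ (p + 1))⁻¹) z := by
  have hfun : (fun w => ((w - b) ^ p)⁻¹) = fun w => (w - b) ^ (-(p : ℤ)) := by
    ext w; rw [zpow_neg, zpow_natCast]
  have hval : ((-p : ℤ) : 𝕜) * (z - b) ^ (-(p : ℤ) - 1) =
      -(p : 𝕜) * ((z - b) ^ (p + 1))⁻¹ := by
    rw [show -(p : ℤ) - 1 = -((p + 1 : ℕ) : ℤ) by push_cast; ring, zpow_neg, zpow_natCast]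
    push_cast; ring
  rw [hfun, ← hval]
  exact (hasDerivAt_zpow _ _ (.inl (sub_ne_zero.mpr hz))).comp_sub_const z b

lemma contDiffAt_poleProd (hz : ∀ i ∈ T, z ≠ a i) (k : ℕ∞) :
    ContDiffAt 𝕜 k (poleProd T a m) z := by
  unfold poleProd
  refine contDiffAt_prod fun i hi => ?_
  exact ((contDiffAt_id.sub contDiffAt_const).pow _).inv
    (pow_ne_zero _ (sub_ne_zero.mpr (hz i hi)))

lemma norm_poleProd_le {ζ : ℝ} (hζ : 0 < ζ) (hsep : ∀ i ∈ T, ζ ≤ ‖z - a i‖) :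
    ‖poleProd T a m z‖ ≤ (ζ ^ ∑ i ∈ T, m i)⁻¹ := by
  rw [poleProd, norm_prod, ← prod_pow_eq_pow_sum, ← prod_inv_distrib]
  refine prod_le_prod (fun i _ => by positivity) fun i hi => ?_
  rw [norm_inv, norm_pow]
  exact inv_anti₀ (pow_pos hζ _) (pow_le_pow_left₀ hζ.le (hsep i hi) _)

variable [DecidableEq ι]

lemma hasDerivAt_poleProd (hz : ∀ i ∈ T, z ≠ a i) :
    HasDerivAt (poleProd T a m)
      (∑ i ∈ T, -(m i : 𝕜) * poleProd T a (Function.update m i (m i + 1)) z) z := by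
  refine (HasDerivAt.fun_finsetProd (u := T) fun i hi =>
    hasDerivAt_inv_sub_pow (hz i hi) (m i)).congr_deriv (sum_congr rfl fun i hi => ?_)
  have hrest : ∏ l ∈ T.erase i, ((z - a l) ^ Function.update m i (m i + 1) l)⁻¹
      = ∏ l ∈ T.erase i, ((z - a l) ^ m l)⁻¹ :=
    prod_congr rfl fun l hl => by rw [Function.update_of_ne (ne_of_mem_erase hl)]
  rw [poleProd, ← mul_prod_erase T _ hi, Function.update_self, hrest, smul_eq_mul]
  ring

lemma deriv_poleProd_eventuallyEq (hz : ∀ i ∈ T, z ≠ a i) :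
    deriv (poleProd T a m) =ᶠ[𝓝 z]
      fun w => ∑ i ∈ T, -(m i : 𝕜) * poleProd T a (Function.update m i (m i + 1)) w := by
  have hnear : ∀ᶠ w in 𝓝 z, ∀ i ∈ T, w ≠ a i :=
    (eventually_all_finset T).mpr fun i hi => eventually_ne_nhds (hz i hi)
  filter_upwards [hnear] with w hw using (hasDerivAt_poleProd T a m hw).deriv

lemma sum_update_succ {i : ι} (hi : i ∈ T) :
    ∑ l ∈ T, Function.update m i (m i + 1) l = ∑ l ∈ T, m l + 1 := by
  rw [sum_update_of_mem hi, sum_eq_add_sum_sdiff_singleton_of_mem hi]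
  ring

theorem norm_iteratedDeriv_poleProd_le {ζ : ℝ} (hζ : 0 < ζ) (hsep : ∀ i ∈ T, ζ ≤ ‖z - a i‖)
    (k : ℕ) :
    ‖iteratedDeriv k (poleProd T a m) z‖ ≤
      (∑ i ∈ T, m i).ascFactorial k / ζ ^ (∑ i ∈ T, m i + k) := by
  have hz : ∀ i ∈ T, z ≠ a i := fun i hi =>
    sub_ne_zero.mp (norm_pos_iff.mp (hζ.trans_le (hsep i hi)))
  induction k generalizing m with
  | zero => simpa [div_eq_mul_inv] using norm_poleProd_le T a m hζ hsep
  | succ k ih =>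
    set S := ∑ i ∈ T, m i
    have hterm : ∀ i ∈ T,
        ‖-(m i : 𝕜) * iteratedDeriv k (poleProd T a (Function.update m i (m i + 1))) z‖ ≤
          m i * ((S + 1).ascFactorial k / ζ ^ (S + 1 + k)) := by
      intro i hi
      rw [norm_mul, norm_neg, ← sum_update_succ T m hi]
      exact mul_le_mul (by simpa using Nat.norm_cast_le (α := 𝕜) (m i)) (ih _) (norm_nonneg _)
        (Nat.cast_nonneg _)
    rw [iteratedDeriv_succ', (deriv_poleProd_eventuallyEq T a m hz).iteratedDeriv_eq,
      iteratedDeriv_fun_sum fun i _ =>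
        contDiffAt_const.mul (contDiffAt_poleProd T a (Function.update m i (m i + 1)) hz k)]
    simp only [iteratedDeriv_const_mul_field]
    calc _ ≤ ∑ i ∈ T,
          ‖-(m i : 𝕜) * iteratedDeriv k (poleProd T a (Function.update m i (m i + 1))) z‖ :=
          norm_sum_le _ _
      _ ≤ ∑ i ∈ T, m i * ((S + 1).ascFactorial k / ζ ^ (S + 1 + k)) := sum_le_sum hterm
      _ = S.ascFactorial (k + 1) / ζ ^ (S + (k + 1)) := by
        rw [← sum_mul, ← Nat.cast_sum, Nat.ascFactorial_succ, ← Nat.succ_ascFactorial,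
          Nat.cast_mul, mul_div_assoc, add_right_comm, add_assoc]

end PoleProd
theorem prony_h_derivative_bound_general (n : ℕ) (x : Fin n → ℂ) (ℓ : Fin n → ℕ)
    (ζ : ℝ) (hζ : 0 < ζ)
    (hsep : ∀ i j, i ≠ j → ζ ≤ ‖x i - x j‖)
    (N : ℕ) (hN : N = ∑ i, ℓ i) (j : Fin n)
    (h : ℂ → ℂ) (hh : h = fun w => ∏ i ∈ Finset.univ.erase j, ((w - x i) ^ ℓ i)⁻¹)
    (k : ℕ) :
    ‖iteratedDeriv k h (x j)‖ ≤
      (∏ r ∈ Finset.range k, ((N : ℝ) + r)) * ζ ^ (-(N : ℤ) - k + ℓ j) := by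
  set S := ∑ i ∈ univ.erase j, ℓ i
  have hNS : N = ℓ j + S := by rw [hN, add_sum_erase _ _ (mem_univ j)]
  have hpow : ζ ^ (-(N : ℤ) - k + ℓ j) = (ζ ^ (S + k))⁻¹ := by
    rw [← zpow_natCast, ← zpow_neg, hNS]
    push_cast
    ring_nf
  have hprod : ∏ r ∈ range k, ((N : ℝ) + r) = N.ascFactorial k := by
    rw [Nat.ascFactorial_eq_prod_range]
    push_cast
    rfl
  subst hh
  rw [hpow, hprod, ← div_eq_mul_inv]
  calc _ ≤ (S.ascFactorial k : ℝ) / ζ ^ (S + k) :=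
        norm_iteratedDeriv_poleProd_le (univ.erase j) x ℓ hζ
          (fun i hi => hsep j i (ne_of_mem_erase hi).symm) k
    _ ≤ N.ascFactorial k / ζ ^ (S + k) := by
        gcongr
        omega

theorem prony_h_derivative_bound (n : ℕ) (x : Fin n → ℂ) (ℓ : Fin n → ℕ)
    (hℓ : ∀ i, 1 ≤ ℓ i) (ζ : ℝ) (hζ : 0 < ζ)
    (hsep : ∀ i j, i ≠ j → ζ ≤ ‖x i - x j‖)
    (N : ℕ) (hN : N = ∑ i, ℓ i) (j : Fin n)
    (h : ℂ → ℂ) (hh : h = fun w => ∏ i ∈ Finset.univ.erase j, ((w - x i) ^ ℓ i)⁻¹)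
    (k : ℕ) :
    ‖iteratedDeriv k h (x j)‖ ≤
      (∏ r ∈ Finset.range k, ((N : ℝ) + r)) * ζ ^ (-(N : ℤ) - k + ℓ j) :=
  prony_h_derivative_bound_general n x ℓ ζ hζ hsep N hN j h hh k
end

section
/- Let z_r ≠ z_s be points on the unit circle with angular distance δ_{rs} = |arg(z_r* z_s)| ∈ (0, π], and let i, j ≥ 0 be integers. Then there is a constant K₁ depending only on i + j such that for all N > K₁, |Σ_{ℓ=0}^{N−1} ℓ^{i+j} (z_r* z_s)^ℓ| ≤ 4 δ_{rs}^{−1} N^{i+j}. -/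
/-!
With `z = z̄_r z_s`, multiplying the sum by `1 - z` and summing by parts leaves the two boundary
terms and a sum of increments of the monotone weight `ℓ ^ (i + j)`, each against a unimodular
factor; all of them together have norm at most `2 N ^ (i + j)`. Jordan's inequality bounds the
chord from below, `|1 - z| = 2 |sin (arg z / 2)| ≥ 2 |arg z| / π ≥ δ / 2`, so the bound holds
for every `N` (`K₁ = 0`).
-/

open Finset Complex ComplexConjugate

theorem one_sub_mul_sum_range_mul_pow {R : Type*} [CommRing R] (f : ℕ → R) (z : R) (N : ℕ) :
    (1 - z) * ∑ ℓ ∈ range N, f ℓ * z ^ ℓ =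
      f 0 - f N * z ^ N + ∑ ℓ ∈ range N, (f (ℓ + 1) - f ℓ) * z ^ (ℓ + 1) := by
  induction N with
  | zero => simp
  | succ N ih =>
    rw [sum_range_succ, sum_range_succ, mul_add, ih]
    ring

theorem norm_one_sub_mul_sum_range_le {f : ℕ → ℝ} (hf : Monotone f) (hf₀ : 0 ≤ f 0)
    {z : ℂ} (hz : ‖z‖ ≤ 1) (N : ℕ) :
    ‖(1 - z) * ∑ ℓ ∈ range N, (f ℓ : ℂ) * z ^ ℓ‖ ≤ 2 * f N := by
  have hfN : 0 ≤ f N := hf₀.trans (hf N.zero_le)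
  have hpow (k : ℕ) : ‖z ^ k‖ ≤ 1 := by rw [norm_pow]; exact pow_le_one₀ (norm_nonneg z) hz
  have hweight (a : ℝ) (ha : 0 ≤ a) (k : ℕ) : ‖(a : ℂ) * z ^ k‖ ≤ a := by
    rw [norm_mul, norm_real, Real.norm_of_nonneg ha]
    exact mul_le_of_le_one_right ha (hpow k)
  have hsum : ‖∑ ℓ ∈ range N, ((f (ℓ + 1) : ℂ) - f ℓ) * z ^ (ℓ + 1)‖ ≤ f N - f 0 :=
    calc _ ≤ ∑ ℓ ∈ range N, (f (ℓ + 1) - f ℓ) := by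
          refine norm_sum_le_of_le _ fun ℓ _ => ?_
          exact_mod_cast hweight _ (sub_nonneg.2 (hf ℓ.le_succ)) _
      _ = f N - f 0 := sum_range_sub f N
  rw [one_sub_mul_sum_range_mul_pow]
  calc _ ≤ ‖(f 0 : ℂ)‖ + ‖(f N : ℂ) * z ^ N‖ + (f N - f 0) :=
        (norm_add_le _ _).trans (add_le_add (norm_sub_le _ _) hsum)
    _ ≤ f 0 + f N + (f N - f 0) := by
        gcongr
        · rw [norm_real, Real.norm_of_nonneg hf₀]
        · exact hweight _ hfN N
    _ = 2 * f N := by ring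

theorem two_div_pi_mul_abs_arg_le_norm_sub_one {z : ℂ} (hz : ‖z‖ = 1) :
    2 / Real.pi * |arg z| ≤ ‖z - 1‖ := by
  have hz_exp : z = exp (I * arg z) := by
    conv_lhs => rw [← norm_mul_exp_arg_mul_I z, hz]
    rw [ofReal_one, one_mul, mul_comm]
  have hhalf : |arg z / 2| ≤ Real.pi / 2 := by
    rw [abs_div, abs_two]; exact div_le_div_of_nonneg_right (abs_arg_le_pi z) zero_le_two
  calc 2 / Real.pi * |arg z| = 2 * (2 / Real.pi * |arg z / 2|) := by
        rw [abs_div, abs_two]; ring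
    _ ≤ 2 * |Real.sin (arg z / 2)| := by gcongr; exact Real.mul_abs_le_abs_sin hhalf
    _ = ‖z - 1‖ := by
        conv_rhs => rw [hz_exp]
        rw [norm_exp_I_mul_ofReal_sub_one, norm_mul, Real.norm_two, Real.norm_eq_abs]

theorem arg_ne_zero_of_norm_eq_one {z : ℂ} (hz : ‖z‖ = 1) (h1 : z ≠ 1) : arg z ≠ 0 :=
  fun h => h1 (ext_norm_arg (by rw [hz, norm_one]) (by rw [h, arg_one]))

theorem conj_mul_ne_one {zr zs : ℂ} (hzr : ‖zr‖ = 1) (hne : zr ≠ zs) : conj zr * zs ≠ 1 := by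
  intro h
  apply hne
  calc zr = zr * (conj zr * zs) := by rw [h, mul_one]
    _ = zs := by rw [← mul_assoc, mul_conj', hzr]; simp

theorem prony_offdiagonal_gram_bound (m : ℕ) :
    ∃ K₁ : ℝ, ∀ (zr zs : ℂ), ‖zr‖ = 1 → ‖zs‖ = 1 → zr ≠ zs →
      ∀ δ : ℝ, δ = |Complex.arg ((starRingEnd ℂ) zr * zs)| →
      ∀ i j : ℕ, i + j = m →
      ∀ N : ℕ, (N : ℝ) > K₁ →
        ‖∑ ℓ ∈ Finset.range N, (ℓ : ℂ) ^ (i + j) * ((starRingEnd ℂ) zr * zs) ^ ℓ‖ ≤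
          4 * δ⁻¹ * (N : ℝ) ^ (i + j) := by
  refine ⟨0, fun zr zs hzr hzs hne δ hδ i j _ N _ => ?_⟩
  set z := conj zr * zs
  have hz : ‖z‖ = 1 := by simp [z, hzr, hzs]
  have hδ_pos : 0 < δ := hδ ▸ abs_pos.2 (arg_ne_zero_of_norm_eq_one hz (conj_mul_ne_one hzr hne))
  have hchord : δ / 2 ≤ ‖1 - z‖ :=
    calc δ / 2 ≤ 2 / Real.pi * δ := by
          have : Real.pi ≤ 4 := Real.pi_le_four
          rw [div_mul_eq_mul_div, le_div_iff₀ Real.pi_pos]; nlinarith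
      _ ≤ ‖1 - z‖ := by
          rw [norm_sub_rev, hδ]; exact two_div_pi_mul_abs_arg_le_norm_sub_one hz
  have hmono : Monotone fun ℓ : ℕ => (ℓ : ℝ) ^ (i + j) := fun a b hab =>
    pow_le_pow_left₀ (Nat.cast_nonneg a) (Nat.cast_le.2 hab) _
  have hbound := norm_one_sub_mul_sum_range_le hmono (by positivity) hz.le N
  push_cast at hbound
  rw [norm_mul] at hbound
  rw [show 4 * δ⁻¹ * (N : ℝ) ^ (i + j) = 2 * (N : ℝ) ^ (i + j) / (δ / 2) by field_simp; ring,
    le_div_iff₀ (by positivity)]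
  calc _ ≤ ‖∑ ℓ ∈ range N, (ℓ : ℂ) ^ (i + j) * z ^ ℓ‖ * ‖1 - z‖ := by gcongr
    _ ≤ 2 * (N : ℝ) ^ (i + j) := by rw [mul_comm]; exact hbound
end

section
/- With notation as in the confluent Vandermonde setting: the Pascal–Vandermonde matrix V, whose row k consists of blocks z_j^k·[1, k, k², …, k^{ℓ_j−1}], satisfies V = U · D, where U is the confluent Vandermonde matrix and D is the block diagonal matrix with j-th block T_{z_j} S_{ℓ_j}, T_{z_j} = diag(1, z_j, …, z_j^{ℓ_j−1}) and S_{ℓ_j} the upper triangular Stirling matrix of the second kind. In particular V is invertible when the z_j are pairwise distinct and nonzero. -/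
open Polynomial Finset

/-- Stirling numbers of the second kind. -/
def stirling2 : ℕ → ℕ → ℕ
  | 0, 0 => 1
  | 0, _ + 1 => 0
  | _ + 1, 0 => 0
  | n + 1, k + 1 => (k + 1) * stirling2 n (k + 1) + stirling2 n k

lemma stirling2_eq_zero_of_lt : ∀ n m : ℕ, n < m → stirling2 n m = 0 := by
  intro n
  induction n with
  | zero =>
    rintro (_ | m) h
    · exact absurd h (lt_irrefl 0)
    · rfl
  | succ n ih =>
    rintro (_ | m) h
    · omega
    · show (m + 1) * stirling2 n (m + 1) + stirling2 n m = 0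
      rw [ih (m + 1) (by omega), ih m (by omega)]
      simp

lemma stirling2_self : ∀ n, stirling2 n n = 1 := by
  intro n
  induction n with
  | zero => rfl
  | succ n ih =>
    show (n + 1) * stirling2 n (n + 1) + stirling2 n n = 1
    rw [stirling2_eq_zero_of_lt n (n + 1) (by omega), ih]
    simp

lemma mul_descFactorial (k m : ℕ) :
    k * k.descFactorial m = k.descFactorial (m + 1) + m * k.descFactorial m := by
  rcases le_or_gt m k with h | h
  · rw [Nat.descFactorial_succ]
    have : k - m + m = k := Nat.sub_add_cancel h
    nlinarith [Nat.sub_add_cancel h]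
  · rw [Nat.descFactorial_eq_zero_iff_lt.2 h,
      Nat.descFactorial_eq_zero_iff_lt.2 (by omega)]
    simp

lemma pow_eq_sum_stirling (n k : ℕ) :
    k ^ n = ∑ m ∈ Finset.range (n + 1), stirling2 n m * k.descFactorial m := by
  induction n with
  | zero => simp [stirling2]
  | succ n ih =>
    have key : ∀ m, stirling2 n m * k.descFactorial m * k
        = stirling2 n m * k.descFactorial (m + 1) + stirling2 n m * (m * k.descFactorial m) := by
      intro m
      have h1 : stirling2 n m * k.descFactorial m * k
          = stirling2 n m * (k * k.descFactorial m) := by ring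
      rw [h1, mul_descFactorial]
      ring
    have lhs : k ^ (n + 1) = (∑ m ∈ Finset.range (n + 1), stirling2 n m * k.descFactorial (m + 1))
        + ∑ m ∈ Finset.range (n + 1), stirling2 n m * (m * k.descFactorial m) := by
      rw [pow_succ, ih, Finset.sum_mul, ← Finset.sum_add_distrib]
      exact Finset.sum_congr rfl fun m _ => key m
    have hB : ∑ m ∈ Finset.range (n + 1), stirling2 n m * (m * k.descFactorial m)
        = ∑ m ∈ Finset.range (n + 1), (m + 1) * stirling2 n (m + 1) * k.descFactorial (m + 1) := by
      have h2 : ∑ m ∈ Finset.range (n + 2), stirling2 n m * (m * k.descFactorial m)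
          = ∑ m ∈ Finset.range (n + 1), stirling2 n m * (m * k.descFactorial m) := by
        rw [Finset.sum_range_succ, stirling2_eq_zero_of_lt n (n + 1) (by omega)]
        simp
      rw [← h2, Finset.sum_range_succ' (fun m => stirling2 n m * (m * k.descFactorial m)) (n + 1)]
      simp only [Nat.mul_zero, Nat.zero_mul, mul_zero, zero_mul, add_zero]
      exact Finset.sum_congr rfl fun m _ => by ring
    rw [lhs, hB, ← Finset.sum_add_distrib,
      Finset.sum_range_succ' (fun m => stirling2 (n + 1) m * k.descFactorial m) (n + 1)]
    have h0 : stirling2 (n + 1) 0 * k.descFactorial 0 = 0 := by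
      show 0 * k.descFactorial 0 = 0
      simp
    rw [h0, add_zero]
    refine Finset.sum_congr rfl fun m _ => ?_
    show stirling2 n m * k.descFactorial (m + 1) + (m + 1) * stirling2 n (m + 1) * k.descFactorial (m + 1)
        = ((m + 1) * stirling2 n (m + 1) + stirling2 n m) * k.descFactorial (m + 1)
    ring

lemma pow_eq_sum_stirling_complex (i L k : ℕ) (hi : i < L) :
    ((k : ℂ)) ^ i = ∑ m : Fin L, (stirling2 i (m : ℕ) : ℂ) * (k.descFactorial (m : ℕ) : ℂ) := by
  have h := pow_eq_sum_stirling i k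
  have hc : ((k : ℂ)) ^ i
      = ∑ m ∈ Finset.range (i + 1), (stirling2 i m : ℂ) * (k.descFactorial m : ℂ) := by
    rw [← Nat.cast_pow, h]
    push_cast
    rfl
  rw [hc, Fin.sum_univ_eq_sum_range (fun m => (stirling2 i m : ℂ) * (k.descFactorial m : ℂ)) L]
  refine Finset.sum_subset ?_ ?_
  · intro x hx
    simp only [Finset.mem_range] at hx ⊢
    omega
  · intro x _ hx
    simp only [Finset.mem_range, not_lt] at hx
    rw [stirling2_eq_zero_of_lt i x (by omega)]
    simp

theorem prony_pascal_vandermonde_factorization (K : ℕ) (z : Fin K → ℂ)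
    (hz : ∀ j, z j ≠ 0) (hdist : Function.Injective z)
    (ℓ : Fin K → ℕ) (hℓ : ∀ j, 1 ≤ ℓ j)
    (F : ℕ) (hF : F = ∑ j, ℓ j)
    (U V : Matrix (Fin F) ((j : Fin K) × Fin (ℓ j)) ℂ)
    (D : Matrix ((j : Fin K) × Fin (ℓ j)) ((j : Fin K) × Fin (ℓ j)) ℂ)
    (hU : ∀ (k : Fin F) (c : (j : Fin K) × Fin (ℓ j)),
      U k c = ((k : ℕ).descFactorial (c.2 : ℕ) : ℂ) * z c.1 ^ ((k : ℕ) - (c.2 : ℕ)))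
    (hV : ∀ (k : Fin F) (c : (j : Fin K) × Fin (ℓ j)),
      V k c = z c.1 ^ (k : ℕ) * ((k : ℕ) : ℂ) ^ (c.2 : ℕ))
    (hD : ∀ r c : (j : Fin K) × Fin (ℓ j),
      D r c = if h : r.1 = c.1 then
          z r.1 ^ (r.2 : ℕ) * (stirling2 (c.2 : ℕ) (r.2 : ℕ) : ℂ)
        else 0) :
    V = U * D ∧ ∀ e : Fin F ≃ (j : Fin K) × Fin (ℓ j), IsUnit (V.submatrix id e) := by
  -- Part 1: the factorization
  have hfact : V = U * D := by
    funext k c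
    rw [Matrix.mul_apply, hV]
    rw [← Finset.univ_sigma_univ, Finset.sum_sigma]
    rw [Finset.sum_eq_single_of_mem c.1 (Finset.mem_univ _) ?side]
    case side =>
      intro j _ hj
      apply Finset.sum_eq_zero
      intro i _
      rw [hD]
      simp only [dif_neg hj, mul_zero]
    -- now the inner sum over i : Fin (ℓ c.1)
    have hterm : ∀ i : Fin (ℓ c.1),
        U k ⟨c.1, i⟩ * D ⟨c.1, i⟩ c
          = z c.1 ^ (k : ℕ) * ((stirling2 (c.2 : ℕ) (i : ℕ) : ℂ)
              * ((k : ℕ).descFactorial (i : ℕ) : ℂ)) := by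
      intro i
      rw [hU, hD]
      simp only [dif_pos rfl]
      rcases le_or_gt (i : ℕ) (k : ℕ) with h | h
      · have : z c.1 ^ ((k : ℕ) - (i : ℕ)) * z c.1 ^ (i : ℕ) = z c.1 ^ (k : ℕ) := by
          rw [← pow_add, Nat.sub_add_cancel h]
        calc ((k : ℕ).descFactorial (i : ℕ) : ℂ) * z c.1 ^ ((k : ℕ) - (i : ℕ)) *
              (z c.1 ^ (i : ℕ) * (stirling2 (c.2 : ℕ) (i : ℕ) : ℂ))
            = (z c.1 ^ ((k : ℕ) - (i : ℕ)) * z c.1 ^ (i : ℕ)) *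
              ((stirling2 (c.2 : ℕ) (i : ℕ) : ℂ) * ((k : ℕ).descFactorial (i : ℕ) : ℂ)) := by
              ring
          _ = _ := by rw [this]
      · rw [Nat.descFactorial_eq_zero_iff_lt.2 h]
        simp
    rw [Finset.sum_congr rfl fun i _ => hterm i, ← Finset.mul_sum]
    congr 1
    rw [pow_eq_sum_stirling_complex (c.2 : ℕ) (ℓ c.1) (k : ℕ) c.2.isLt]
  refine ⟨hfact, ?_⟩
  intro e
  -- D is a unit
  set B : ∀ j : Fin K, Matrix (Fin (ℓ j)) (Fin (ℓ j)) ℂ :=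
    fun j => Matrix.of fun i i' => z j ^ (i : ℕ) * (stirling2 (i' : ℕ) (i : ℕ) : ℂ) with hB
  have hDblock : D = Matrix.blockDiagonal' B := by
    funext r c
    rcases r with ⟨j, i⟩
    rcases c with ⟨j', i'⟩
    rw [hD, Matrix.blockDiagonal'_apply']
    by_cases h : j = j'
    · subst h
      simp [hB]
    · simp [h]
  have hBunit : ∀ j, IsUnit (B j) := by
    intro j
    rw [Matrix.isUnit_iff_isUnit_det]
    have htri : (B j).BlockTriangular id := by
      intro a b hab
      simp only [id_eq] at hab
      show z j ^ (a : ℕ) * (stirling2 (b : ℕ) (a : ℕ) : ℂ) = 0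
      rw [stirling2_eq_zero_of_lt (b : ℕ) (a : ℕ) hab]
      simp
    rw [Matrix.det_of_upperTriangular htri]
    rw [isUnit_iff_ne_zero]
    apply Finset.prod_ne_zero_iff.2
    intro i _
    show z j ^ (i : ℕ) * (stirling2 (i : ℕ) (i : ℕ) : ℂ) ≠ 0
    rw [stirling2_self]
    simpa using pow_ne_zero _ (hz j)
  have hDunit : IsUnit D := by
    rw [hDblock]
    have : IsUnit B := by
      refine ⟨⟨B, fun j => (B j)⁻¹, ?_, ?_⟩, rfl⟩
      · funext j
        exact Matrix.mul_nonsing_inv _ ((Matrix.isUnit_iff_isUnit_det _).1 (hBunit j))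
      · funext j
        exact Matrix.nonsing_inv_mul _ ((Matrix.isUnit_iff_isUnit_det _).1 (hBunit j))
    exact (Matrix.blockDiagonal'RingHom (fun j => Fin (ℓ j)) ℂ).isUnit_map this
  -- U ∘ e is a unit (confluent Vandermonde argument)
  have hUunit : IsUnit (U.submatrix id e) := by
    rw [Matrix.isUnit_iff_isUnit_det, isUnit_iff_ne_zero]
    intro hdet
    obtain ⟨v, hv0, hvU⟩ := (Matrix.exists_vecMul_eq_zero_iff).2 hdet
    -- the polynomial with coefficients v
    set P : ℂ[X] := ∑ k : Fin F, Polynomial.C (v k) * Polynomial.X ^ (k : ℕ) with hP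
    have hcoeff : ∀ k : Fin F, P.coeff (k : ℕ) = v k := by
      intro k
      rw [hP, Polynomial.finset_sum_coeff]
      rw [Finset.sum_eq_single_of_mem k (Finset.mem_univ _)]
      · simp
      · intro b _ hb
        rw [Polynomial.coeff_C_mul, Polynomial.coeff_X_pow, if_neg (by
          intro h
          exact hb (Fin.val_injective h).symm)]
        simp
    have hP0 : P ≠ 0 := by
      intro h
      apply hv0
      funext k
      have := hcoeff k
      rw [h] at this
      simpa using this.symm
    -- each derivative vanishes at z j
    have hroot : ∀ (j : Fin K) (i : Fin (ℓ j)),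
        (Polynomial.derivative^[(i : ℕ)] P).IsRoot (z j) := by
      intro j i
      have hvc : ∑ k : Fin F, v k * U k ⟨j, i⟩ = 0 := by
        have := congrFun hvU (e.symm ⟨j, i⟩)
        simpa [Matrix.vecMul, dotProduct, Matrix.submatrix_apply] using this
      have heval : (Polynomial.derivative^[(i : ℕ)] P).eval (z j)
          = ∑ k : Fin F, v k * U k ⟨j, i⟩ := by
        rw [hP, Polynomial.iterate_derivative_sum]
        rw [Polynomial.eval_finset_sum]
        refine Finset.sum_congr rfl fun k _ => ?_
        rw [Polynomial.iterate_derivative_C_mul,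
          Polynomial.iterate_derivative_X_pow_eq_C_mul]
        rw [hU]
        simp only [Polynomial.eval_mul, Polynomial.eval_C, Polynomial.eval_pow,
          Polynomial.eval_X]
      rw [Polynomial.IsRoot, heval, hvc]
    have hmult : ∀ j : Fin K, ℓ j ≤ P.rootMultiplicity (z j) := by
      intro j
      have hℓj := hℓ j
      have : ℓ j - 1 < P.rootMultiplicity (z j) := by
        rw [Polynomial.lt_rootMultiplicity_iff_isRoot_iterate_derivative hP0]
        intro m hm
        have hmlt : m < ℓ j := by omega
        exact hroot j ⟨m, hmlt⟩
      omega
    -- counting roots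
    have hcount : ∀ j : Fin K, P.roots.count (z j) = P.rootMultiplicity (z j) :=
      fun j => Polynomial.count_roots P
    have hsum : (F : ℕ) ≤ Multiset.card P.roots := by
      have h1 : F ≤ ∑ j : Fin K, P.roots.count (z j) := by
        rw [hF]
        exact Finset.sum_le_sum fun j _ => (hcount j).symm ▸ hmult j
      have h2 : ∑ a ∈ Finset.univ.image z, P.roots.count a
          = ∑ j : Fin K, P.roots.count (z j) :=
        Finset.sum_image (f := fun a => P.roots.count a) fun x _ y _ h => hdist h
      have h3 : ∑ a ∈ Finset.univ.image z, P.roots.count a ≤ Multiset.card P.roots := by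
        rw [← Multiset.toFinset_sum_count_eq P.roots]
        rw [show ∑ a ∈ Finset.univ.image z, P.roots.count a
            = ∑ a ∈ (Finset.univ.image z) ∩ P.roots.toFinset, P.roots.count a from ?_]
        · exact Finset.sum_le_sum_of_subset (Finset.inter_subset_right)
        · refine (Finset.sum_subset Finset.inter_subset_left ?_).symm
          intro x hxs hx
          rw [Multiset.count_eq_zero]
          intro hmem
          exact hx (Finset.mem_inter.2 ⟨hxs, Multiset.mem_toFinset.2 hmem⟩)
      omega
    have hdeg : P.natDegree < F := by
      have hFpos : 0 < F := by
        rcases Function.ne_iff.1 hv0 with ⟨k, _⟩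
        exact k.pos
      have : P.natDegree ≤ F - 1 := by
        apply Polynomial.natDegree_sum_le_of_forall_le
        intro k _
        calc (Polynomial.C (v k) * Polynomial.X ^ (k : ℕ)).natDegree
            ≤ (k : ℕ) := Polynomial.natDegree_C_mul_le _ _ |>.trans
              (by simp [Polynomial.natDegree_X_pow])
          _ ≤ F - 1 := by omega
      omega
    have := Polynomial.card_roots' P
    omega
  -- combine
  rw [hfact, ← Matrix.submatrix_mul_equiv U D id e e]
  exact hUunit.mul ((Matrix.isUnit_iff_isUnit_det _).2
    (by rw [Matrix.det_submatrix_equiv_self]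
        exact (Matrix.isUnit_iff_isUnit_det _).1 hDunit))
end

section
/- Let x_1, …, x_n be pairwise distinct complex numbers with |x_i| ≤ 1 and |x_i − x_j| ≥ ζ > 0 for i ≠ j, and ℓ_1, …, ℓ_n positive integers with N = Σ ℓ_i. Let u_{j,k} denote the row with index ℓ_1 + ⋯ + ℓ_{j−1} + k + 1 of the inverse of the confluent Vandermonde matrix U(x_1, ℓ_1, …, x_n, ℓ_n). Then ‖u_{j,k}‖₁ = Σ_{s=1}^{N} |(u_{j,k})_s| ≤ (2/ζ)^{N−ℓ_j} · (2^k/k!) · (1 + 2N/ζ)^{ℓ_j−1−k} for every k = 0, …, ℓ_j − 1. -/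
/-!
Row `e ⟨j, k⟩` of `U⁻¹` is the coefficient vector of the Hermite basis polynomial
`P_{j,k} = (X - x_j)^k / k! · ∏_{i ≠ j} (X - x_i)^{ℓ_i} · T_{j,k}(X - x_j)`, where `T_{j,k}` is
the Taylor polynomial of degree `ℓ_j - 1 - k` at `x_j` of `h_j = ∏_{i ≠ j} (X - x_i)^{-ℓ_i}`:
its derivatives of order `< ℓ_{j'}` vanish at every other node, and at `x_j` its Taylor expansion
is `(X - x_j)^k / k! · (1 + O((X - x_j)^{ℓ_j - k}))`.

The ℓ¹ norm of coefficients is submultiplicative and every factor `X - x_i` has norm at most `2`.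
The Taylor coefficients of `h_j` are majorized by those of `(ζ - X)^{-(N - ℓ_j)}`, so the `t`-th
is at most `N^t ζ^{-(N - ℓ_j + t)}`; against the factor `2^t` coming from `(X - x_j)^t` they sum to
at most `ζ^{-(N - ℓ_j)} (1 + 2N/ζ)^{ℓ_j - 1 - k}`.
-/

open Finset

namespace Polynomial

section l1Norm

variable {R : Type*}

noncomputable def l1Norm [SeminormedRing R] (p : R[X]) : ℝ := p.sum fun _ a => ‖a‖

section SeminormedRing

variable [SeminormedRing R]

lemma l1Norm_nonneg (p : R[X]) : 0 ≤ l1Norm p :=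
  sum_nonneg fun _ _ => norm_nonneg _

lemma l1Norm_eq_sum_range {p : R[X]} {n : ℕ} (hn : p.natDegree < n) :
    l1Norm p = ∑ i ∈ range n, ‖p.coeff i‖ :=
  p.sum_over_range' (fun _ => norm_zero) n hn

lemma sum_range_norm_coeff_le_l1Norm (p : R[X]) (n : ℕ) :
    ∑ i ∈ range n, ‖p.coeff i‖ ≤ l1Norm p := by
  rw [l1Norm_eq_sum_range (Nat.lt_succ_of_le (le_max_right n p.natDegree))]
  exact sum_le_sum_of_subset_of_nonneg (range_subset_range.2 (by omega))
    fun _ _ _ => norm_nonneg _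

@[simp]
lemma l1Norm_monomial (n : ℕ) (a : R) : l1Norm (monomial n a) = ‖a‖ :=
  sum_monomial_index a _ norm_zero

@[simp]
lemma l1Norm_C (a : R) : l1Norm (C a) = ‖a‖ :=
  l1Norm_monomial 0 a

@[simp]
lemma l1Norm_neg (p : R[X]) : l1Norm (-p) = l1Norm p := by
  simp [l1Norm, Polynomial.sum]

lemma l1Norm_add_le (p q : R[X]) : l1Norm (p + q) ≤ l1Norm p + l1Norm q := by
  rw [l1Norm, l1Norm, l1Norm, sum_eq_of_subset _ (fun _ => norm_zero) support_add,
    sum_eq_of_subset _ (fun _ => norm_zero) subset_union_left,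
    sum_eq_of_subset _ (fun _ => norm_zero) subset_union_right, ← sum_add_distrib]
  exact sum_le_sum fun n _ => coeff_add p q n ▸ norm_add_le _ _

lemma l1Norm_sum_le {ι : Type*} (s : Finset ι) (f : ι → R[X]) :
    l1Norm (∑ i ∈ s, f i) ≤ ∑ i ∈ s, l1Norm (f i) := by
  classical
  induction s using Finset.induction_on with
  | empty => simp [l1Norm]
  | insert i s hi ih =>
    rw [sum_insert hi, sum_insert hi]
    exact (l1Norm_add_le _ _).trans (by gcongr)

lemma l1Norm_mul_le (p q : R[X]) : l1Norm (p * q) ≤ l1Norm p * l1Norm q := by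
  rw [mul_eq_sum_sum]
  refine (l1Norm_sum_le _ _).trans ?_
  simp only [l1Norm, Polynomial.sum, sum_mul_sum]
  refine sum_le_sum fun i _ => (l1Norm_sum_le _ _).trans (sum_le_sum fun j _ => ?_)
  rw [l1Norm_monomial]
  exact norm_mul_le _ _

variable [NormOneClass R]

@[simp]
lemma l1Norm_one : l1Norm (1 : R[X]) = 1 := by
  rw [← C_1, l1Norm_C, norm_one]

@[simp]
lemma l1Norm_X : l1Norm (X : R[X]) = 1 := by
  rw [← monomial_one_one_eq_X, l1Norm_monomial, norm_one]

lemma l1Norm_pow_le (p : R[X]) (m : ℕ) : l1Norm (p ^ m) ≤ l1Norm p ^ m := by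
  induction m with
  | zero => simp
  | succ m ih =>
    rw [pow_succ, pow_succ]
    exact (l1Norm_mul_le _ _).trans (mul_le_mul_of_nonneg_right ih (l1Norm_nonneg _))

lemma l1Norm_X_sub_C_le (a : R) : l1Norm (X - C a) ≤ 1 + ‖a‖ := by
  simpa [sub_eq_add_neg] using l1Norm_add_le X (-C a)

lemma l1Norm_C_sub_X_le (a : R) : l1Norm (C a - X) ≤ ‖a‖ + 1 := by
  simpa [sub_eq_add_neg] using l1Norm_add_le (C a) (-X)

end SeminormedRing

section SeminormedCommRing

variable [SeminormedCommRing R] [NormOneClass R]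

lemma l1Norm_prod_le {ι : Type*} (s : Finset ι) (f : ι → R[X]) :
    l1Norm (∏ i ∈ s, f i) ≤ ∏ i ∈ s, l1Norm (f i) := by
  classical
  induction s using Finset.induction_on with
  | empty => simp
  | insert i s hi ih =>
    rw [prod_insert hi, prod_insert hi]
    exact (l1Norm_mul_le _ _).trans (mul_le_mul_of_nonneg_left ih (l1Norm_nonneg _))

lemma l1Norm_comp_le (p q : R[X]) :
    l1Norm (p.comp q) ≤ p.sum fun t a => ‖a‖ * l1Norm q ^ t := by
  rw [comp_eq_sum_left]
  refine (l1Norm_sum_le _ _).trans (sum_le_sum fun t _ => ?_)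
  refine (l1Norm_mul_le _ _).trans ?_
  rw [l1Norm_C]
  exact mul_le_mul_of_nonneg_left (l1Norm_pow_le _ _) (norm_nonneg _)

end SeminormedCommRing

end l1Norm

end Polynomial

namespace PowerSeries

variable {R : Type*}

def IsMajorant [SeminormedRing R] (g : ℝ⟦X⟧) (f : R⟦X⟧) : Prop :=
  ∀ n, ‖coeff n f‖ ≤ coeff n g

namespace IsMajorant

lemma mul [SeminormedRing R] {f f' : R⟦X⟧} {g g' : ℝ⟦X⟧} (h : IsMajorant g f)
    (h' : IsMajorant g' f') : IsMajorant (g * g') (f * f') := fun n => by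
  rw [coeff_mul, coeff_mul]
  refine (norm_sum_le _ _).trans (sum_le_sum fun ab _ => (norm_mul_le _ _).trans ?_)
  exact mul_le_mul (h _) (h' _) (norm_nonneg _) ((norm_nonneg _).trans (h _))

variable [SeminormedCommRing R] [NormOneClass R]

lemma one : IsMajorant 1 (1 : R⟦X⟧) := fun n => by
  rcases eq_or_ne n 0 with rfl | hn <;> simp [coeff_one, *]

lemma pow {f : R⟦X⟧} {g : ℝ⟦X⟧} (h : IsMajorant g f) (m : ℕ) : IsMajorant (g ^ m) (f ^ m) := by
  induction m with
  | zero => simpa using one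
  | succ m ih => simpa only [pow_succ] using ih.mul h

lemma prod {ι : Type*} (s : Finset ι) {f : ι → R⟦X⟧} {g : ι → ℝ⟦X⟧}
    (h : ∀ i ∈ s, IsMajorant (g i) (f i)) : IsMajorant (∏ i ∈ s, g i) (∏ i ∈ s, f i) := by
  classical
  induction s using Finset.induction_on with
  | empty => simpa using one
  | insert i s hi ih =>
    rw [prod_insert hi, prod_insert hi]
    exact (h i (mem_insert_self i s)).mul (ih fun i hi => h i (mem_insert_of_mem hi))

end IsMajorant

section geomSeries

variable [CommRing R]

def geomSeries (a : R) : R⟦X⟧ := mk fun n => a ^ (n + 1)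

lemma geomSeries_eq_C_mul_rescale (a : R) : geomSeries a = C a * rescale a (mk 1) := by
  ext n
  simp [geomSeries, coeff_rescale, pow_succ']

lemma coeff_geomSeries_pow (a : R) (m n : ℕ) :
    coeff n (geomSeries a ^ m) = a ^ (m + n) * coeff n ((mk 1 : R⟦X⟧) ^ m) := by
  rw [geomSeries_eq_C_mul_rescale, mul_pow, ← map_pow, ← map_pow, coeff_C_mul, coeff_rescale,
    pow_add, mul_assoc]

lemma C_sub_X_mul_geomSeries_inv {K : Type*} [Field K] {a : K} (ha : a ≠ 0) :
    (C a - X) * geomSeries a⁻¹ = 1 := by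
  have : geomSeries a⁻¹ = invUnitsSub (Units.mk0 a ha) := by
    ext n
    simp [geomSeries, coeff_invUnitsSub]
  rw [this, mul_comm]
  exact invUnitsSub_mul_sub (Units.mk0 a ha)

end geomSeries

lemma isMajorant_geomSeries [SeminormedCommRing R] [NormOneClass R] {a : R} {b : ℝ}
    (h : ‖a‖ ≤ b) : IsMajorant (geomSeries b) (geomSeries a) := fun n => by
  simp only [geomSeries, coeff_mk]
  exact (norm_pow_le _ _).trans (pow_le_pow_left₀ (norm_nonneg _) h _)

lemma coeff_mk_one_pow_le (m n : ℕ) : coeff n ((mk 1 : ℝ⟦X⟧) ^ m) ≤ ((m + n : ℕ) : ℝ) ^ n := by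
  rcases m with _ | d
  · rcases eq_or_ne n 0 with rfl | hn <;> simp [coeff_one, *]
  · rw [mk_one_pow_eq_mk_choose_add, coeff_mk, Nat.choose_symm_add]
    exact_mod_cast (Nat.choose_le_pow _ _).trans (Nat.pow_le_pow_left (by omega) _)

end PowerSeries

lemma sum_range_succ_pow_le_one_add_pow {r : ℝ} (hr : 0 ≤ r) (M : ℕ) :
    ∑ t ∈ range (M + 1), r ^ t ≤ (1 + r) ^ M := by
  rw [add_comm 1 r, add_pow]
  refine sum_le_sum fun t ht => ?_
  rw [one_pow, mul_one]
  exact le_mul_of_one_le_right (by positivity)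
    (mod_cast Nat.choose_pos (Nat.lt_succ_iff.1 (mem_range.1 ht)))

lemma sum_eq_of_sigma_fin_equiv {ι : Type*} [Fintype ι] {ℓ : ι → ℕ} {N : ℕ}
    (e : ((j : ι) × Fin (ℓ j)) ≃ Fin N) : ∑ i, ℓ i = N := by
  simpa using Fintype.card_congr e

open Polynomial
open scoped Nat PowerSeries

namespace Polynomial

variable {R : Type*} [CommSemiring R]

lemma coeff_mul_trunc_of_lt (p : R[X]) (f : R⟦X⟧) {m n : ℕ} (h : m < n) :
    (p * PowerSeries.trunc n f).coeff m = PowerSeries.coeff m ((p : R⟦X⟧) * f) := by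
  rw [coeff_mul, PowerSeries.coeff_mul]
  refine sum_congr rfl fun ab hab => ?_
  have := mem_antidiagonal.1 hab
  rw [coeff_coe, PowerSeries.coeff_trunc, if_pos (by omega)]

lemma eval_iterate_derivative_eq_factorial_mul_coeff_taylor (p : R[X]) (r : R) (m : ℕ) :
    (derivative^[m] p).eval r = m ! * (taylor r p).coeff m := by
  rw [← factorial_smul_hasseDeriv, LinearMap.smul_apply, eval_smul, nsmul_eq_mul, taylor_coeff]

lemma eval_iterate_derivative_eq_sum_range {p : R[X]} {n : ℕ} (hp : p.natDegree < n) (m : ℕ)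
    (y : R) : (derivative^[m] p).eval y =
      ∑ s ∈ range n, p.coeff s * (s.descFactorial m * y ^ (s - m)) := by
  conv_lhs => rw [p.as_sum_range' n hp]
  simp [iterate_derivative_sum, ← C_mul_X_pow_eq_monomial, iterate_derivative_C_mul,
    iterate_derivative_X_pow_eq_C_mul, eval_finsetSum]

end Polynomial

namespace Hermite

section Interpolation

variable {K : Type*} [Field K] {ι : Type*} [Fintype ι] [DecidableEq ι] (x : ι → K) (ℓ : ι → ℕ)

/- The factors are `x_i - X` rather than `X - x_i`; since `nodeInvSeries x ℓ j` is the Taylor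
series of `1 / nodePoly x ℓ j` at `x j`, the signs cancel in `hermiteBasis`. -/
noncomputable def nodePoly (j : ι) : K[X] := ∏ i ∈ univ.erase j, (C (x i) - X) ^ ℓ i

noncomputable def nodeInvSeries (j : ι) : K⟦X⟧ :=
  ∏ i ∈ univ.erase j, PowerSeries.geomSeries (x i - x j)⁻¹ ^ ℓ i

noncomputable def hermiteBasis (j : ι) (k : ℕ) : K[X] :=
  C (k ! : K)⁻¹ * (X - C (x j)) ^ k * nodePoly x ℓ j *
    (PowerSeries.trunc (ℓ j - k) (nodeInvSeries x ℓ j)).comp (X - C (x j))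

variable {x ℓ}

lemma taylor_nodePoly (j : ι) :
    taylor (x j) (nodePoly x ℓ j) = ∏ i ∈ univ.erase j, (C (x i - x j) - X) ^ ℓ i := by
  simp only [nodePoly, taylor_apply, Polynomial.prod_comp, pow_comp, sub_comp, C_comp, X_comp,
    C_sub]
  exact prod_congr rfl fun i _ => by ring

lemma taylor_nodePoly_mul_nodeInvSeries (hx : Function.Injective x) (j : ι) :
    (taylor (x j) (nodePoly x ℓ j) : K⟦X⟧) * nodeInvSeries x ℓ j = 1 := by
  rw [taylor_nodePoly, ← coeToPowerSeries.ringHom_apply, map_prod, nodeInvSeries,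
    ← prod_mul_distrib]
  refine prod_eq_one fun i hi => ?_
  have hne : x i - x j ≠ 0 := sub_ne_zero.2 (hx.ne (ne_of_mem_erase hi))
  rw [map_pow, coeToPowerSeries.ringHom_apply, Polynomial.coe_sub, coe_C, coe_X, ← mul_pow,
    PowerSeries.C_sub_X_mul_geomSeries_inv hne, one_pow]

lemma taylor_hermiteBasis (j : ι) (k : ℕ) :
    taylor (x j) (hermiteBasis x ℓ j k) = C (k ! : K)⁻¹ * X ^ k *
      (taylor (x j) (nodePoly x ℓ j) * PowerSeries.trunc (ℓ j - k) (nodeInvSeries x ℓ j)) := by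
  simp [hermiteBasis, taylor_apply, comp_assoc, mul_assoc]

lemma coeff_taylor_nodePoly_mul_trunc (hx : Function.Injective x) (j : ι) {m n : ℕ}
    (hm : m < n) :
    (taylor (x j) (nodePoly x ℓ j) * PowerSeries.trunc n (nodeInvSeries x ℓ j)).coeff m =
      if m = 0 then 1 else 0 := by
  rw [coeff_mul_trunc_of_lt _ _ hm, taylor_nodePoly_mul_nodeInvSeries hx, PowerSeries.coeff_one]

lemma eval_iterate_derivative_hermiteBasis_self [CharZero K] (hx : Function.Injective x)
    {j : ι} {k k' : ℕ} (hk' : k' < ℓ j) :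
    (derivative^[k'] (hermiteBasis x ℓ j k)).eval (x j) = if k' = k then 1 else 0 := by
  rw [eval_iterate_derivative_eq_factorial_mul_coeff_taylor, taylor_hermiteBasis, mul_assoc,
    coeff_C_mul, mul_comm (X ^ k), coeff_mul_X_pow']
  by_cases hkk' : k ≤ k'
  · rw [if_pos hkk', coeff_taylor_nodePoly_mul_trunc hx j (by omega)]
    rcases eq_or_ne k' k with rfl | hne
    · simp [Nat.factorial_ne_zero]
    · simp [hne, show k' - k ≠ 0 by omega]
  · simp [hkk', show k' ≠ k by omega]

lemma eval_iterate_derivative_hermiteBasis_of_ne {j j' : ι} (hj : j' ≠ j) (k : ℕ) {k' : ℕ}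
    (hk' : k' < ℓ j') : (derivative^[k'] (hermiteBasis x ℓ j k)).eval (x j') = 0 := by
  have hdvd : (C (x j') - X) ^ ℓ j' ∣ hermiteBasis x ℓ j k :=
    (dvd_prod_of_mem _ (mem_erase.2 ⟨hj, mem_univ j'⟩)).mul_left _ |>.mul_right _
  have hroot := dvd_trans (dvd_pow_self _ (by omega))
    (pow_sub_dvd_iterate_derivative_of_pow_dvd k' hdvd)
  simpa using eval_dvd (x := x j') hroot

lemma eval_iterate_derivative_hermiteBasis [CharZero K] (hx : Function.Injective x)
    (a b : (j : ι) × Fin (ℓ j)) :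
    (derivative^[b.2] (hermiteBasis x ℓ a.1 a.2)).eval (x b.1) = if b = a then 1 else 0 := by
  obtain ⟨j, k⟩ := a
  obtain ⟨j', k'⟩ := b
  rcases eq_or_ne j' j with rfl | hj
  · simp [eval_iterate_derivative_hermiteBasis_self hx k'.isLt, Fin.val_inj]
  · simp [eval_iterate_derivative_hermiteBasis_of_ne hj _ k'.isLt, hj]

lemma natDegree_nodePoly_le (j : ι) : (nodePoly x ℓ j).natDegree ≤ ∑ i ∈ univ.erase j, ℓ i :=
  natDegree_prod_le _ _ |>.trans <| sum_le_sum fun i _ => by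
    have : (C (x i) - X).natDegree ≤ 1 := (natDegree_sub_le _ _).trans (by simp)
    simpa using natDegree_pow_le_of_le (ℓ i) this

lemma natDegree_hermiteBasis_lt {j : ι} {k : ℕ} (hk : k < ℓ j) :
    (hermiteBasis x ℓ j k).natDegree < ∑ i, ℓ i := by
  have hsum := sum_erase_add univ ℓ (mem_univ j)
  have htrunc := PowerSeries.natDegree_trunc_lt (nodeInvSeries x ℓ j) (ℓ j - k - 1)
  rw [show ℓ j - k - 1 + 1 = ℓ j - k by omega] at htrunc
  have hnode := natDegree_nodePoly_le (x := x) (ℓ := ℓ) j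
  rw [← natDegree_taylor _ (x j), taylor_hermiteBasis]
  refine natDegree_mul_le.trans_lt ?_
  grw [natDegree_C_mul_X_pow_le, natDegree_mul_le, natDegree_taylor]
  omega

section ConfluentVandermonde

variable (x) {N : ℕ} (e : ((j : ι) × Fin (ℓ j)) ≃ Fin N)

def confluentVandermonde : Matrix (Fin N) (Fin N) K := fun r c =>
  ((r : ℕ).descFactorial (e.symm c).2 : K) * x (e.symm c).1 ^ ((r : ℕ) - (e.symm c).2)

noncomputable def hermiteCoeffMatrix : Matrix (Fin N) (Fin N) K := fun r s =>
  (hermiteBasis x ℓ (e.symm r).1 (e.symm r).2).coeff s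

variable {x e}

lemma hermiteCoeffMatrix_apply_equiv (a : (j : ι) × Fin (ℓ j)) (s : Fin N) :
    hermiteCoeffMatrix x e (e a) s = (hermiteBasis x ℓ a.1 a.2).coeff s := by
  rw [hermiteCoeffMatrix, e.symm_apply_apply]

lemma hermiteCoeffMatrix_mul_confluentVandermonde [CharZero K] (hx : Function.Injective x) :
    hermiteCoeffMatrix x e * confluentVandermonde x e = 1 := by
  ext r c
  have hdeg := sum_eq_of_sigma_fin_equiv e ▸ natDegree_hermiteBasis_lt (x := x) (e.symm r).2.isLt
  have h := eval_iterate_derivative_hermiteBasis hx (e.symm r) (e.symm c)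
  rw [eval_iterate_derivative_eq_sum_range hdeg, ← Fin.sum_univ_eq_sum_range] at h
  simpa [Matrix.mul_apply, Matrix.one_apply, hermiteCoeffMatrix, confluentVandermonde, eq_comm]
    using h

lemma inv_confluentVandermonde [CharZero K] (hx : Function.Injective x) :
    (confluentVandermonde x e)⁻¹ = hermiteCoeffMatrix x e :=
  Matrix.inv_eq_left_inv (hermiteCoeffMatrix_mul_confluentVandermonde hx)

end ConfluentVandermonde

end Interpolation

section Bound

variable {ι : Type*} [Fintype ι] [DecidableEq ι] {x : ι → ℂ} {ℓ : ι → ℕ} {ζ : ℝ}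

lemma norm_coeff_nodeInvSeries_le (hζ : 0 < ζ) (hsep : ∀ i i', i ≠ i' → ζ ≤ ‖x i - x i'‖)
    (j : ι) (n : ℕ) :
    ‖PowerSeries.coeff n (nodeInvSeries x ℓ j)‖ ≤
      ζ⁻¹ ^ (∑ i ∈ univ.erase j, ℓ i + n) * ((∑ i ∈ univ.erase j, ℓ i + n : ℕ) : ℝ) ^ n := by
  have hmaj : PowerSeries.IsMajorant (PowerSeries.geomSeries ζ⁻¹ ^ ∑ i ∈ univ.erase j, ℓ i)
      (nodeInvSeries x ℓ j) := by
    rw [← prod_pow_eq_pow_sum]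
    refine PowerSeries.IsMajorant.prod _ fun i hi => (PowerSeries.isMajorant_geomSeries ?_).pow _
    rw [norm_inv]
    exact inv_anti₀ hζ (hsep i j (ne_of_mem_erase hi))
  refine (hmaj n).trans ?_
  rw [PowerSeries.coeff_geomSeries_pow]
  exact mul_le_mul_of_nonneg_left (PowerSeries.coeff_mk_one_pow_le _ _) (by positivity)

lemma l1Norm_trunc_nodeInvSeries_comp_le (hx : ∀ i, ‖x i‖ ≤ 1) (hζ : 0 < ζ)
    (hsep : ∀ i i', i ≠ i' → ζ ≤ ‖x i - x i'‖) {j : ι} {k : ℕ} (hk : k < ℓ j) {N : ℕ}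
    (hN : ∑ i, ℓ i = N) :
    l1Norm ((PowerSeries.trunc (ℓ j - k) (nodeInvSeries x ℓ j)).comp (X - C (x j))) ≤
      ζ⁻¹ ^ (N - ℓ j) * (1 + 2 * N / ζ) ^ (ℓ j - 1 - k) := by
  have hsplit := sum_erase_add univ ℓ (mem_univ j)
  set m := ∑ i ∈ univ.erase j, ℓ i
  rw [show ℓ j - k = ℓ j - 1 - k + 1 by omega, show N - ℓ j = m by omega]
  calc _ ≤ ∑ t ∈ range (ℓ j - 1 - k + 1),
        ‖PowerSeries.coeff t (nodeInvSeries x ℓ j)‖ * 2 ^ t := by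
        refine (l1Norm_comp_le _ _).trans ?_
        rw [sum_over_range' _ (by simp) _ (PowerSeries.natDegree_trunc_lt _ _)]
        refine sum_le_sum fun t ht => ?_
        rw [PowerSeries.coeff_trunc, if_pos (mem_range.1 ht)]
        gcongr
        · exact l1Norm_nonneg _
        · exact (l1Norm_X_sub_C_le _).trans (by linarith [hx j])
    _ ≤ ∑ t ∈ range (ℓ j - 1 - k + 1), ζ⁻¹ ^ m * (2 * N / ζ) ^ t := by
        refine sum_le_sum fun t ht => ?_
        have htN : m + t ≤ N := by have := mem_range.1 ht; omega
        calc ‖PowerSeries.coeff t (nodeInvSeries x ℓ j)‖ * 2 ^ t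
            ≤ ζ⁻¹ ^ (m + t) * ((m + t : ℕ) : ℝ) ^ t * 2 ^ t := by
              gcongr
              exact norm_coeff_nodeInvSeries_le hζ hsep j t
          _ ≤ ζ⁻¹ ^ (m + t) * (N : ℝ) ^ t * 2 ^ t := by gcongr
          _ = ζ⁻¹ ^ m * (2 * N / ζ) ^ t := by
              rw [pow_add, div_eq_mul_inv, mul_pow, mul_pow]
              ring
    _ ≤ ζ⁻¹ ^ m * (1 + 2 * N / ζ) ^ (ℓ j - 1 - k) := by
        rw [← mul_sum]
        gcongr
        exact sum_range_succ_pow_le_one_add_pow (by positivity) _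

lemma l1Norm_hermiteBasis_le (hx : ∀ i, ‖x i‖ ≤ 1) (hζ : 0 < ζ)
    (hsep : ∀ i i', i ≠ i' → ζ ≤ ‖x i - x i'‖) {j : ι} {k : ℕ} (hk : k < ℓ j) {N : ℕ}
    (hN : ∑ i, ℓ i = N) :
    l1Norm (hermiteBasis x ℓ j k) ≤
      (2 / ζ) ^ (N - ℓ j) * (2 ^ k / k !) * (1 + 2 * N / ζ) ^ (ℓ j - 1 - k) := by
  have hm : ∑ i ∈ univ.erase j, ℓ i = N - ℓ j := by
    have := sum_erase_add univ ℓ (mem_univ j)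
    omega
  have hlin : l1Norm ((X - C (x j)) ^ k) ≤ 2 ^ k :=
    (l1Norm_pow_le _ _).trans <| pow_le_pow_left₀ (l1Norm_nonneg _)
      ((l1Norm_X_sub_C_le _).trans (by linarith [hx j])) _
  have hnode : l1Norm (nodePoly x ℓ j) ≤ 2 ^ (N - ℓ j) := by
    rw [← hm, ← prod_pow_eq_pow_sum]
    refine (l1Norm_prod_le _ _).trans (prod_le_prod (fun _ _ => l1Norm_nonneg _) fun i _ => ?_)
    exact (l1Norm_pow_le _ _).trans <| pow_le_pow_left₀ (l1Norm_nonneg _)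
      ((l1Norm_C_sub_X_le _).trans (by linarith [hx i])) _
  calc l1Norm (hermiteBasis x ℓ j k)
      ≤ (k ! : ℝ)⁻¹ * 2 ^ k * 2 ^ (N - ℓ j) *
          (ζ⁻¹ ^ (N - ℓ j) * (1 + 2 * N / ζ) ^ (ℓ j - 1 - k)) := by
        refine (l1Norm_mul_le _ _).trans (mul_le_mul ?_
          (l1Norm_trunc_nodeInvSeries_comp_le hx hζ hsep hk hN) (l1Norm_nonneg _) (by positivity))
        refine (l1Norm_mul_le _ _).trans (mul_le_mul ?_ hnode (l1Norm_nonneg _) (by positivity))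
        refine (l1Norm_mul_le _ _).trans (mul_le_mul ?_ hlin (l1Norm_nonneg _) (by positivity))
        rw [l1Norm_C, norm_inv, Complex.norm_natCast]
    _ = _ := by
        rw [div_pow, div_eq_mul_inv, div_eq_mul_inv (2 ^ k : ℝ), inv_pow]
        ring

end Bound

end Hermite

theorem prony_confluent_vandermonde_inverse_rows_general (n : ℕ) (x : Fin n → ℂ)
    (hx : ∀ i, ‖x i‖ ≤ 1)
    (ζ : ℝ) (hζ : 0 < ζ)
    (hsep : ∀ i i' : Fin n, i ≠ i' → ζ ≤ ‖x i - x i'‖)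
    (ℓ : Fin n → ℕ)
    (N : ℕ)
    (e : ((j : Fin n) × Fin (ℓ j)) ≃ Fin N)
    (U : Matrix (Fin N) (Fin N) ℂ)
    (hU : ∀ (k : Fin N) (c : Fin N),
      U k c = (((k : ℕ).descFactorial ((e.symm c).2 : ℕ) : ℂ)) *
        x (e.symm c).1 ^ ((k : ℕ) - ((e.symm c).2 : ℕ)))
    (j : Fin n) (k : Fin (ℓ j)) :
    ∑ s : Fin N, ‖U⁻¹ (e ⟨j, k⟩) s‖ ≤
      (2 / ζ) ^ (N - ℓ j) * (2 ^ (k : ℕ) / (Nat.factorial k : ℝ)) *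
        (1 + 2 * N / ζ) ^ (ℓ j - 1 - (k : ℕ)) := by
  have hinj : Function.Injective x :=
    fun i i' h => by_contra fun hne => hζ.not_ge (by simpa [h] using hsep i i' hne)
  have hUV : U⁻¹ = Hermite.hermiteCoeffMatrix x e := by
    rw [show U = Hermite.confluentVandermonde x e from Matrix.ext hU,
      Hermite.inv_confluentVandermonde hinj]
  simp only [hUV, Hermite.hermiteCoeffMatrix_apply_equiv]
  rw [Fin.sum_univ_eq_sum_range (fun s => ‖(Hermite.hermiteBasis x ℓ j k).coeff s‖)]
  exact (sum_range_norm_coeff_le_l1Norm _ _).trans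
    (Hermite.l1Norm_hermiteBasis_le hx hζ hsep k.isLt (sum_eq_of_sigma_fin_equiv e))

theorem prony_confluent_vandermonde_inverse_rows (n : ℕ) (x : Fin n → ℂ)
    (hx : ∀ i, ‖x i‖ ≤ 1) (hdist : Function.Injective x)
    (ζ : ℝ) (hζ : 0 < ζ)
    (hsep : ∀ i i' : Fin n, i ≠ i' → ζ ≤ ‖x i - x i'‖)
    (ℓ : Fin n → ℕ) (hℓ : ∀ i, 1 ≤ ℓ i)
    (N : ℕ) (hN : N = ∑ i, ℓ i)
    (e : ((j : Fin n) × Fin (ℓ j)) ≃ Fin N)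
    (U : Matrix (Fin N) (Fin N) ℂ)
    (hU : ∀ (k : Fin N) (c : Fin N),
      U k c = (((k : ℕ).descFactorial ((e.symm c).2 : ℕ) : ℂ)) *
        x (e.symm c).1 ^ ((k : ℕ) - ((e.symm c).2 : ℕ)))
    (j : Fin n) (k : Fin (ℓ j)) :
    ∑ s : Fin N, ‖U⁻¹ (e ⟨j, k⟩) s‖ ≤
      (2 / ζ) ^ (N - ℓ j) * (2 ^ (k : ℕ) / (Nat.factorial k : ℝ)) *
        (1 + 2 * N / ζ) ^ (ℓ j - 1 - (k : ℕ)) :=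
  prony_confluent_vandermonde_inverse_rows_general n x hx ζ hζ hsep ℓ N e U hU j k
end

section
/- Under the hypotheses of the confluent Vandermonde inverse bound (nodes on or inside the unit circle, separation ζ), and with ℓ_j replaced by ℓ_j + 1 throughout: the rows v_{j,k} (k = 0, …, ℓ_j) of the inverse Pascal–Vandermonde matrix V(z_1, ℓ_1+1, …, z_K, ℓ_K+1)^{−1} satisfy ‖v_{j,k}‖₁ ≤ C · ζ^{−(R−k)}, where R = Σ_j (ℓ_j + 1) and C is a constant independent of ζ (depending only on ℓ_1, …, ℓ_K). -/
/-!
Row `(j, k)` of `V⁻¹` is the coefficient vector of the polynomial `Q` of degree `< R` with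
`(θ^t Q)(z_r) = δ_{(r,t),(j,k)}`, where `θ = X · d/dX` is the Euler operator: the product of a
coefficient row with column `(r, t)` of `V` is `∑ₛ Q_s s^t z_r^s = (θ^t Q)(z_r)`.

We take `Q = H · B` with `B = ∏_{r ≠ j} ((X - z_r) / (z_j - z_r))^(ℓ_r + 1)`, which settles the
conditions at the other nodes, and `H = ∑_{i ≤ ℓ_j} h_i (X - z_j)^i`. The conditions at `z_j` form a
lower triangular system for the `h_i` with diagonal entries `z_j^i i!` of modulus `≥ 1` and
off-diagonal entries `O(ζ^-(m-i))`, so forward substitution gives `h_i = O(ζ^-(i-k))`.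
All estimates go through the submultiplicative weighted norm `∑ₙ |p_n| ρ^n`: for `ρ = ζ`, applied to
Taylor expansions at `z_j`, it bounds the triangular system (each factor of `B` has norm `≤ 2`), and
for `ρ = 1` it gives `‖Q‖₁ ≤ ‖H‖₁ ‖B‖₁ = O(ζ^-(ℓ_j-k)) (2/ζ)^(R-ℓ_j-1)`. The missing factor `ζ⁻¹`
is supplied by `ζ < 2R`.
-/

open Finset Polynomial
open scoped Nat

namespace Polynomial

section EulerOperator

variable {R : Type*}

section CommSemiring

variable [CommSemiring R]

noncomputable def eulerOp : Module.End R R[X] := LinearMap.mulLeft R X ∘ₗ derivative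

lemma eulerOp_apply (p : R[X]) : eulerOp p = X * derivative p := rfl

lemma coeff_eulerOp_pow (m : ℕ) (p : R[X]) (s : ℕ) :
    ((eulerOp ^ m) p).coeff s = (s : R) ^ m * p.coeff s := by
  induction m with
  | zero => simp
  | succ m ih =>
    rw [pow_succ', Module.End.mul_apply, eulerOp_apply]
    cases s with
    | zero => simp
    | succ s => rw [coeff_X_mul, coeff_derivative, ih, pow_succ]; push_cast; ring

lemma natDegree_eulerOp_pow_le (m : ℕ) (p : R[X]) :
    ((eulerOp ^ m) p).natDegree ≤ p.natDegree :=
  natDegree_le_iff_coeff_eq_zero.2 fun s hs => by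
    rw [coeff_eulerOp_pow, coeff_eq_zero_of_natDegree_lt hs, mul_zero]

lemma eval_eulerOp_pow_eq_sum {N : ℕ} {p : R[X]} (hp : p.natDegree < N) (m : ℕ) (z : R) :
    eval z ((eulerOp ^ m) p) = ∑ s : Fin N, p.coeff s * z ^ (s : ℕ) * (s : R) ^ m := by
  rw [eval_eq_sum_range' ((natDegree_eulerOp_pow_le m p).trans_lt hp), ← Fin.sum_univ_eq_sum_range]
  simp only [coeff_eulerOp_pow]
  exact sum_congr rfl fun _ _ => by ring

lemma taylor_eulerOp (w : R) (p : R[X]) :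
    taylor w (eulerOp p) = (X + C w) * derivative (taylor w p) := by
  rw [eulerOp_apply, taylor_mul, taylor_X, taylor_apply, taylor_apply, derivative_comp]
  simp

end CommSemiring

variable [CommRing R]

lemma pow_sub_dvd_eulerOp_pow {w : R} {n : ℕ} {p : R[X]} (m : ℕ) (h : (X - C w) ^ n ∣ p) :
    (X - C w) ^ (n - m) ∣ (eulerOp ^ m) p := by
  induction m with
  | zero => simpa using h
  | succ m ih =>
    rw [pow_succ', Module.End.mul_apply, eulerOp_apply, Nat.sub_succ]
    exact (pow_sub_one_dvd_derivative_of_pow_dvd ih).mul_left X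

lemma eval_eulerOp_pow_eq_zero_of_dvd {w : R} {n m : ℕ} {p : R[X]} (h : (X - C w) ^ n ∣ p)
    (hm : m < n) : eval w ((eulerOp ^ m) p) = 0 := by
  obtain ⟨q, hq⟩ := pow_sub_dvd_eulerOp_pow m h
  rw [hq, eval_mul, eval_pow, eval_sub, eval_X, eval_C, sub_self, zero_pow (by omega), zero_mul]

lemma eval_eulerOp_pow_X_sub_C_pow_mul (w : R) (i : ℕ) (g : R[X]) :
    eval w ((eulerOp ^ i) ((X - C w) ^ i * g)) = w ^ i * i ! * eval w g := by
  induction i generalizing g with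
  | zero => simp
  | succ i ih =>
    have key : eulerOp ((X - C w) ^ (i + 1) * g)
        = (X - C w) ^ i * (X * (C ((i : R) + 1) * g + (X - C w) * derivative g)) := by
      rw [eulerOp_apply, derivative_mul, derivative_X_sub_C_pow]
      push_cast
      ring
    rw [pow_succ, Module.End.mul_apply, key, ih]
    simp only [eval_mul, eval_add, eval_X, eval_C, eval_sub, sub_self, zero_mul, add_zero,
      Nat.factorial_succ]
    push_cast
    ring

end EulerOperator

section WeightedNorm

variable {S : Type*} [NormedCommRing S]

def weightedNorm (ρ : ℝ) (p : S[X]) : ℝ := ∑ n ∈ p.support, ‖p.coeff n‖ * ρ ^ n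

variable {ρ : ℝ}

lemma weightedNorm_eq_sum_of_support_subset {p : S[X]} {s : Finset ℕ} (hs : p.support ⊆ s) :
    weightedNorm ρ p = ∑ n ∈ s, ‖p.coeff n‖ * ρ ^ n :=
  sum_subset hs fun n _ hn => by rw [notMem_support_iff.1 hn, norm_zero, zero_mul]

lemma weightedNorm_eq_sum_range {p : S[X]} {N : ℕ} (hp : p.natDegree < N) :
    weightedNorm ρ p = ∑ n ∈ range N, ‖p.coeff n‖ * ρ ^ n :=
  weightedNorm_eq_sum_of_support_subset fun n hn =>
    mem_range.2 ((le_natDegree_of_mem_supp n hn).trans_lt hp)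

lemma weightedNorm_monomial (n : ℕ) (a : S) : weightedNorm ρ (monomial n a) = ‖a‖ * ρ ^ n := by
  rw [weightedNorm_eq_sum_of_support_subset (support_monomial_subset n a), sum_singleton,
    coeff_monomial_same]

lemma weightedNorm_one [NormOneClass S] : weightedNorm ρ (1 : S[X]) = 1 := by
  rw [← monomial_zero_one, weightedNorm_monomial, norm_one, pow_zero, mul_one]

section Nonneg

variable (hρ : 0 ≤ ρ)
include hρ

lemma weightedNorm_nonneg (p : S[X]) : 0 ≤ weightedNorm ρ p :=
  sum_nonneg fun _ _ => by positivity

lemma norm_coeff_mul_pow_le_weightedNorm (p : S[X]) (n : ℕ) :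
    ‖p.coeff n‖ * ρ ^ n ≤ weightedNorm ρ p := by
  by_cases hn : n ∈ p.support
  · exact single_le_sum (f := fun n => ‖p.coeff n‖ * ρ ^ n) (fun _ _ => by positivity) hn
  · rw [notMem_support_iff.1 hn, norm_zero, zero_mul]
    exact weightedNorm_nonneg hρ p

lemma weightedNorm_add_le (p q : S[X]) :
    weightedNorm ρ (p + q) ≤ weightedNorm ρ p + weightedNorm ρ q := by
  classical
  rw [weightedNorm_eq_sum_of_support_subset support_add,
    weightedNorm_eq_sum_of_support_subset (subset_union_left (s₂ := q.support)),
    weightedNorm_eq_sum_of_support_subset (subset_union_right (s₁ := p.support)),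
    ← sum_add_distrib]
  refine sum_le_sum fun n _ => ?_
  rw [coeff_add, ← add_mul]
  gcongr
  exact norm_add_le _ _

lemma weightedNorm_sum_le {ι : Type*} (t : Finset ι) (f : ι → S[X]) :
    weightedNorm ρ (∑ i ∈ t, f i) ≤ ∑ i ∈ t, weightedNorm ρ (f i) :=
  le_sum_of_subadditive _ (by simp [weightedNorm]) (weightedNorm_add_le hρ) t f

lemma weightedNorm_mul_le (p q : S[X]) :
    weightedNorm ρ (p * q) ≤ weightedNorm ρ p * weightedNorm ρ q := by
  rw [mul_eq_sum_sum]
  calc _ ≤ ∑ i ∈ p.support, weightedNorm ρ (q.sum fun j a => monomial (i + j) (p.coeff i * a)) :=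
        weightedNorm_sum_le hρ _ _
    _ ≤ ∑ i ∈ p.support, ‖p.coeff i‖ * ρ ^ i * weightedNorm ρ q := by
        refine sum_le_sum fun i _ => ?_
        rw [Polynomial.sum]
        refine (weightedNorm_sum_le hρ _ _).trans ?_
        simp only [weightedNorm_monomial]
        rw [weightedNorm, mul_sum]
        refine sum_le_sum fun j _ => ?_
        rw [pow_add, mul_mul_mul_comm]
        gcongr
        exact norm_mul_le _ _
    _ = weightedNorm ρ p * weightedNorm ρ q := (sum_mul _ _ _).symm

lemma weightedNorm_C_mul_le (a : S) (p : S[X]) :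
    weightedNorm ρ (C a * p) ≤ ‖a‖ * weightedNorm ρ p := by
  simpa [← monomial_zero_left, weightedNorm_monomial] using weightedNorm_mul_le hρ (C a) p

variable [NormOneClass S]

lemma weightedNorm_X_add_C_le (a : S) : weightedNorm ρ (X + C a) ≤ ρ + ‖a‖ := by
  simpa [← monomial_one_one_eq_X, ← monomial_zero_left, weightedNorm_monomial]
    using weightedNorm_add_le hρ (X : S[X]) (C a)

lemma weightedNorm_X_sub_C_le (a : S) : weightedNorm ρ (X - C a) ≤ ρ + ‖a‖ := by
  simpa [sub_eq_add_neg] using weightedNorm_X_add_C_le hρ (-a)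

lemma weightedNorm_pow_le (p : S[X]) (n : ℕ) : weightedNorm ρ (p ^ n) ≤ weightedNorm ρ p ^ n := by
  induction n with
  | zero => rw [pow_zero, pow_zero, weightedNorm_one]
  | succ n ih =>
    rw [pow_succ, pow_succ]
    exact (weightedNorm_mul_le hρ _ _).trans
      (mul_le_mul_of_nonneg_right ih (weightedNorm_nonneg hρ p))

lemma weightedNorm_prod_le {ι : Type*} (t : Finset ι) (f : ι → S[X]) :
    weightedNorm ρ (∏ i ∈ t, f i) ≤ ∏ i ∈ t, weightedNorm ρ (f i) := by
  induction t using Finset.cons_induction with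
  | empty => rw [prod_empty, prod_empty, weightedNorm_one]
  | cons a t ha ih =>
    rw [prod_cons, prod_cons]
    exact (weightedNorm_mul_le hρ _ _).trans
      (mul_le_mul_of_nonneg_left ih (weightedNorm_nonneg hρ _))

lemma mul_weightedNorm_derivative_le (p : S[X]) :
    ρ * weightedNorm ρ (derivative p) ≤ p.natDegree * weightedNorm ρ p := by
  set d := p.natDegree
  have hsupp : (derivative p).support ⊆ range d := fun n hn => by
    by_contra hnd
    rw [mem_range, not_lt] at hnd
    rw [mem_support_iff, coeff_derivative, coeff_eq_zero_of_natDegree_lt (by omega), zero_mul] at hn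
    exact hn rfl
  calc ρ * weightedNorm ρ (derivative p)
      ≤ ∑ n ∈ range d, ‖p.coeff (n + 1)‖ * ‖((n + 1 : ℕ) : S)‖ * ρ ^ (n + 1) := by
        rw [weightedNorm_eq_sum_of_support_subset hsupp, mul_sum]
        refine sum_le_sum fun n _ => ?_
        rw [coeff_derivative, pow_succ, mul_left_comm, mul_comm ρ]
        gcongr
        exact_mod_cast norm_mul_le _ _
    _ ≤ ∑ n ∈ range d, d * (‖p.coeff (n + 1)‖ * ρ ^ (n + 1)) := by
        refine sum_le_sum fun n hn => ?_
        have hcast : ‖((n + 1 : ℕ) : S)‖ ≤ d := by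
          refine (Nat.norm_cast_le _).trans ?_
          rw [norm_one, mul_one]
          exact_mod_cast mem_range.1 hn
        calc ‖p.coeff (n + 1)‖ * ‖((n + 1 : ℕ) : S)‖ * ρ ^ (n + 1)
            ≤ ‖p.coeff (n + 1)‖ * d * ρ ^ (n + 1) := by gcongr
          _ = d * (‖p.coeff (n + 1)‖ * ρ ^ (n + 1)) := by ring
    _ ≤ d * weightedNorm ρ p := by
        rw [← mul_sum, weightedNorm_eq_sum_range (Nat.lt_succ_self d), sum_range_succ' _ d]
        gcongr
        exact le_add_of_nonneg_right (by positivity)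

lemma weightedNorm_prod_pow_le {ι : Type*} (t : Finset ι) (f : ι → S[X]) (n : ι → ℕ)
    {b : ℝ} (hb : ∀ i ∈ t, weightedNorm ρ (f i) ≤ b) :
    weightedNorm ρ (∏ i ∈ t, f i ^ n i) ≤ b ^ ∑ i ∈ t, n i := by
  rw [← prod_pow_eq_pow_sum]
  refine (weightedNorm_prod_le hρ _ _).trans (prod_le_prod (fun _ _ => weightedNorm_nonneg hρ _)
    fun i hi => (weightedNorm_pow_le hρ _ _).trans ?_)
  exact pow_le_pow_left₀ (weightedNorm_nonneg hρ _) (hb i hi) _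

end Nonneg

variable [NormOneClass S]

lemma weightedNorm_taylor_eulerOp_pow_le (hρ : 0 < ρ) (w : S) {d : ℕ} {p : S[X]}
    (hp : p.natDegree ≤ d) (m : ℕ) :
    weightedNorm ρ (taylor w ((eulerOp ^ m) p))
      ≤ ((ρ + ‖w‖) * d / ρ) ^ m * weightedNorm ρ (taylor w p) := by
  induction m with
  | zero => simp
  | succ m ih =>
    set g := taylor w ((eulerOp ^ m) p)
    have hg : g.natDegree ≤ d := by
      rw [natDegree_taylor]
      exact (natDegree_eulerOp_pow_le m p).trans hp
    have hder : weightedNorm ρ (derivative g) ≤ d / ρ * weightedNorm ρ g := by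
      rw [div_mul_eq_mul_div, le_div_iff₀ hρ, mul_comm]
      refine (mul_weightedNorm_derivative_le hρ.le g).trans ?_
      gcongr
      exact weightedNorm_nonneg hρ.le g
    rw [pow_succ', Module.End.mul_apply, taylor_eulerOp]
    calc _ ≤ weightedNorm ρ (X + C w) * weightedNorm ρ (derivative g) :=
          weightedNorm_mul_le hρ.le _ _
      _ ≤ (ρ + ‖w‖) * (d / ρ * (((ρ + ‖w‖) * d / ρ) ^ m * weightedNorm ρ (taylor w p))) := by
          gcongr
          · exact weightedNorm_nonneg hρ.le _
          · exact weightedNorm_X_add_C_le hρ.le w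
          · exact hder.trans (by gcongr)
      _ = _ := by ring

lemma norm_eval_eulerOp_pow_le (hρ : 0 < ρ) (w : S) {d : ℕ} {p : S[X]}
    (hp : p.natDegree ≤ d) (m : ℕ) :
    ‖eval w ((eulerOp ^ m) p)‖ ≤ ((ρ + ‖w‖) * d / ρ) ^ m * weightedNorm ρ (taylor w p) := by
  rw [← taylor_coeff_zero]
  simpa using (norm_coeff_mul_pow_le_weightedNorm hρ.le _ 0).trans
    (weightedNorm_taylor_eulerOp_pow_le hρ w hp m)

end WeightedNorm

end Polynomial

lemma coeff_mul_pascalVandermonde_eq_one {S : Type*} [CommRing S] {ι : Type*} [DecidableEq ι]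
    {R : ℕ} (e : ι ≃ Fin R) (z : ι → S) (t : ι → ℕ) {V : Matrix (Fin R) (Fin R) S}
    (hV : ∀ k c, V k c = z (e.symm c) ^ (k : ℕ) * ((k : ℕ) : S) ^ t (e.symm c))
    {Q : ι → S[X]} (hdeg : ∀ σ, (Q σ).natDegree < R)
    (hQ : ∀ σ τ, eval (z τ) ((eulerOp ^ t τ) (Q σ)) = if τ = σ then 1 else 0) :
    Matrix.of (fun r (s : Fin R) => (Q (e.symm r)).coeff s) * V = 1 := by
  ext r c
  simp only [Matrix.mul_apply, Matrix.of_apply, hV, ← mul_assoc]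
  rw [← eval_eulerOp_pow_eq_sum (hdeg _), hQ, Matrix.one_apply]
  simp only [e.symm.injective.eq_iff, eq_comm]

section ForwardSubstitution

def forwardSubst {𝕜 : Type*} [Field 𝕜] (a : ℕ → ℕ → 𝕜) (d : ℕ → 𝕜) : ℕ → 𝕜
  | i => (a i i)⁻¹ * (d i - ∑ x : Fin i, forwardSubst a d x * a i x)

lemma sum_forwardSubst_mul {𝕜 : Type*} [Field 𝕜] (a : ℕ → ℕ → 𝕜) (d : ℕ → 𝕜) {i : ℕ}
    (h : a i i ≠ 0) : ∑ x ∈ range (i + 1), forwardSubst a d x * a i x = d i := by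
  rw [sum_range_succ, ← Fin.sum_univ_eq_sum_range (fun x => forwardSubst a d x * a i x),
    forwardSubst]
  field_simp
  exact add_sub_cancel _ _

variable {𝕜 : Type*} [NormedField 𝕜] {a : ℕ → ℕ → 𝕜} {h : ℕ → 𝕜} {N k : ℕ}

lemma eq_zero_of_sum_mul_eq_ite (hdiag : ∀ i < N, a i i ≠ 0)
    (hsol : ∀ i < N, ∑ x ∈ range (i + 1), h x * a i x = if i = k then 1 else 0) :
    ∀ i < N, i < k → h i = 0 := by
  intro i
  induction i using Nat.strong_induction_on with
  | _ i ih =>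
    intro hiN hik
    have hi := hsol i hiN
    rw [sum_range_succ, sum_eq_zero fun x hx => by
      have hxi := mem_range.1 hx
      rw [ih x hxi (by omega) (by omega), zero_mul], zero_add, if_neg hik.ne] at hi
    exact (mul_eq_zero.1 hi).resolve_right (hdiag i hiN)

lemma norm_le_of_sum_mul_eq_ite {A q : ℝ} (hA : 0 ≤ A) (hq : 0 ≤ q)
    (hdiag : ∀ i < N, 1 ≤ ‖a i i‖) (hoff : ∀ i < N, ∀ x < i, ‖a i x‖ ≤ A * q ^ (i - x))
    (hsol : ∀ i < N, ∑ x ∈ range (i + 1), h x * a i x = if i = k then 1 else 0) :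
    ∀ i < N, ‖h i‖ ≤ ((A + 1) * q) ^ (i - k) := by
  have hzero := eq_zero_of_sum_mul_eq_ite
    (fun i hi => norm_pos_iff.1 (one_pos.trans_le (hdiag i hi))) hsol
  intro i
  induction i using Nat.strong_induction_on with
  | _ i ih =>
    intro hiN
    have hnorm : ‖h i‖ ≤ ‖h i * a i i‖ := by
      rw [norm_mul]
      exact le_mul_of_one_le_right (norm_nonneg _) (hdiag i hiN)
    have hsplit (hki : k ≤ i) :
        h i * a i i = (if i = k then 1 else 0) - ∑ x ∈ Ico k i, h x * a i x := by
      rw [← hsol i hiN, sum_range_succ, ← sum_range_add_sum_Ico _ hki, sum_eq_zero fun x hx => by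
        have hxk := mem_range.1 hx
        rw [hzero x (by omega) hxk, zero_mul]]
      ring
    rcases lt_trichotomy i k with hik | rfl | hki
    · rw [hzero i hiN hik, norm_zero]
      positivity
    · rw [hsplit le_rfl, Ico_self, sum_empty, if_pos rfl, sub_zero, norm_one] at hnorm
      simpa using hnorm
    · have hterm : ∀ x ∈ Ico k i, ‖h x * a i x‖ ≤ A * q ^ (i - k) * (A + 1) ^ (x - k) := by
        intro x hx
        obtain ⟨hkx, hxi⟩ := mem_Ico.1 hx
        calc ‖h x * a i x‖ ≤ ((A + 1) * q) ^ (x - k) * (A * q ^ (i - x)) := by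
              rw [norm_mul]
              gcongr
              exacts [ih x hxi (by omega), hoff i hiN x hxi]
          _ = A * (q ^ (x - k) * q ^ (i - x)) * (A + 1) ^ (x - k) := by rw [mul_pow]; ring
          _ = A * q ^ (i - k) * (A + 1) ^ (x - k) := by
              rw [← pow_add, show x - k + (i - x) = i - k by omega]
      have hgeom : A * ∑ j ∈ range (i - k), (A + 1) ^ j = (A + 1) ^ (i - k) - 1 := by
        rw [mul_comm, ← geom_sum_mul, add_sub_cancel_right]
      calc ‖h i‖ ≤ ‖∑ x ∈ Ico k i, h x * a i x‖ := by
            simpa [hsplit hki.le, if_neg hki.ne'] using hnorm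
        _ ≤ ∑ x ∈ Ico k i, A * q ^ (i - k) * (A + 1) ^ (x - k) := norm_sum_le_of_le _ hterm
        _ = q ^ (i - k) * (A * ∑ j ∈ range (i - k), (A + 1) ^ j) := by
            rw [← mul_sum, sum_Ico_eq_sum_range]
            simp only [Nat.add_sub_cancel_left]
            ring
        _ ≤ ((A + 1) * q) ^ (i - k) := by
            rw [hgeom, mul_pow, mul_comm ((A + 1) ^ _)]
            gcongr
            exact sub_le_self _ zero_le_one

end ForwardSubstitution

lemma pow_le_pow_mul_pow_of_one_le_mul {q c : ℝ} (hq : 0 ≤ q) (hcq : 1 ≤ c * q) {e e' : ℕ}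
    (h : e ≤ e') : q ^ e ≤ c ^ (e' - e) * q ^ e' := by
  obtain ⟨d, rfl⟩ := Nat.exists_eq_add_of_le h
  calc q ^ e = q ^ e * 1 := (mul_one _).symm
    _ ≤ q ^ e * (c * q) ^ d := by gcongr; exact one_le_pow₀ hcq
    _ = c ^ (e + d - e) * q ^ (e + d) := by rw [Nat.add_sub_cancel_left, mul_pow, pow_add]; ring

section HermiteInterpolant

noncomputable def nodeFactor (w u : ℂ) : ℂ[X] := C (w - u)⁻¹ * (X - C u)

section NodeFactor

variable {w u : ℂ} {ζ : ℝ}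

lemma eval_nodeFactor_self (h : w ≠ u) : eval w (nodeFactor w u) = 1 := by
  simp [nodeFactor, sub_ne_zero.2 h]

lemma weightedNorm_one_nodeFactor_le (hu : ‖u‖ = 1) (hζ : 0 < ζ) (hwu : ζ ≤ ‖w - u‖) :
    weightedNorm 1 (nodeFactor w u) ≤ 2 * ζ⁻¹ := by
  have hX : weightedNorm 1 (X - C u) ≤ 2 :=
    (weightedNorm_X_sub_C_le zero_le_one u).trans (by rw [hu]; norm_num)
  calc weightedNorm 1 (nodeFactor w u) ≤ ‖(w - u)⁻¹‖ * weightedNorm 1 (X - C u) :=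
        weightedNorm_C_mul_le zero_le_one _ _
    _ ≤ ζ⁻¹ * 2 := by
        gcongr
        · exact weightedNorm_nonneg zero_le_one _
        · rw [norm_inv]
          exact inv_anti₀ hζ hwu
    _ = 2 * ζ⁻¹ := mul_comm _ _

lemma weightedNorm_taylor_nodeFactor_le (hζ : 0 < ζ) (hwu : ζ ≤ ‖w - u‖) :
    weightedNorm ζ (taylor w (nodeFactor w u)) ≤ 2 := by
  have hpos : 0 < ‖w - u‖ := hζ.trans_le hwu
  have htaylor : taylor w (nodeFactor w u) = C (w - u)⁻¹ * (X + C (w - u)) := by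
    simp [nodeFactor, add_sub_assoc]
  calc weightedNorm ζ (taylor w (nodeFactor w u)) ≤ ‖(w - u)⁻¹‖ * (ζ + ‖w - u‖) := by
        rw [htaylor]
        refine (weightedNorm_C_mul_le hζ.le _ _).trans ?_
        gcongr
        exact weightedNorm_X_add_C_le hζ.le _
    _ = ζ / ‖w - u‖ + 1 := by
        rw [norm_inv]
        field_simp
    _ ≤ 2 := by
        rw [div_add_one hpos.ne', div_le_iff₀ hpos]
        linarith

end NodeFactor

variable {ι : Type*} [Fintype ι] [DecidableEq ι]

noncomputable def vanishingFactor (z : ι → ℂ) (ℓ : ι → ℕ) (j : ι) : ℂ[X] :=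
  ∏ r ∈ univ.erase j, nodeFactor (z j) (z r) ^ (ℓ r + 1)

/-- The coefficient of `h_i` in the condition `(θ^m (H · B))(z_j) = δ_{m,k}`. -/
noncomputable def eulerMoment (z : ι → ℂ) (ℓ : ι → ℕ) (j : ι) (m i : ℕ) : ℂ :=
  eval (z j) ((eulerOp ^ m) ((X - C (z j)) ^ i * vanishingFactor z ℓ j))

noncomputable def hermiteCoeff (z : ι → ℂ) (ℓ : ι → ℕ) (j : ι) (k : ℕ) : ℕ → ℂ :=
  forwardSubst (eulerMoment z ℓ j) fun m => if m = k then 1 else 0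

noncomputable def hermiteInterpolant (z : ι → ℂ) (ℓ : ι → ℕ) (j : ι) (k : ℕ) : ℂ[X] :=
  (∑ i ∈ range (ℓ j + 1), C (hermiteCoeff z ℓ j k i) * (X - C (z j)) ^ i) * vanishingFactor z ℓ j

def momentBound (R : ℕ) : ℝ := ((2 * (R : ℝ) + 1) ^ 2) ^ R * 2 ^ R

def interpolantBound (R : ℕ) : ℝ :=
  (R + 1) * (momentBound R + 1) ^ R * (2 * (2 * (R : ℝ) + 1)) ^ R

variable {z : ι → ℂ} {ℓ : ι → ℕ} {ζ : ℝ}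

lemma natDegree_vanishingFactor_le (j : ι) :
    (vanishingFactor z ℓ j).natDegree ≤ ∑ r ∈ univ.erase j, (ℓ r + 1) := by
  refine (natDegree_prod_le _ _).trans (sum_le_sum fun r _ => natDegree_pow_le.trans ?_)
  refine (Nat.mul_le_mul_left _ (natDegree_C_mul_le _ _)).trans ?_
  rw [natDegree_X_sub_C, mul_one]

lemma X_sub_C_pow_dvd_vanishingFactor {r j : ι} (h : r ≠ j) :
    (X - C (z r)) ^ (ℓ r + 1) ∣ vanishingFactor z ℓ j :=
  (pow_dvd_pow_of_dvd (dvd_mul_left _ _) _).trans (dvd_prod_of_mem _ (mem_erase.2 ⟨h, mem_univ r⟩))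

lemma eulerMoment_eq_zero_of_lt {j : ι} {m i : ℕ} (h : m < i) : eulerMoment z ℓ j m i = 0 :=
  eval_eulerOp_pow_eq_zero_of_dvd (dvd_mul_right _ _) h

lemma natDegree_hermiteInterpolant_lt {R : ℕ} (hR : R = ∑ r, (ℓ r + 1)) (j : ι) (k : ℕ) :
    (hermiteInterpolant z ℓ j k).natDegree < R := by
  have hsplit := add_sum_erase univ (fun r => ℓ r + 1) (mem_univ j)
  have hsum : (∑ i ∈ range (ℓ j + 1), C (hermiteCoeff z ℓ j k i) * (X - C (z j)) ^ i).natDegree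
      ≤ ℓ j :=
    natDegree_sum_le_of_forall_le _ _ fun i hi =>
      (natDegree_C_mul_le _ _).trans (by simpa [Nat.lt_succ_iff] using hi)
  have := natDegree_vanishingFactor_le (z := z) (ℓ := ℓ) j
  exact natDegree_mul_le.trans_lt (by omega)

lemma eval_eulerOp_pow_hermiteInterpolant_of_ne {r j : ι} (h : r ≠ j) (k : ℕ) {m : ℕ}
    (hm : m ≤ ℓ r) : eval (z r) ((eulerOp ^ m) (hermiteInterpolant z ℓ j k)) = 0 :=
  eval_eulerOp_pow_eq_zero_of_dvd ((X_sub_C_pow_dvd_vanishingFactor h).mul_left _)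
    (Nat.lt_succ_of_le hm)

section Separated

variable (hζ : 0 < ζ) (hsep : ∀ r s, r ≠ s → ζ ≤ ‖z r - z s‖)
include hζ hsep

lemma eval_vanishingFactor_self (j : ι) : eval (z j) (vanishingFactor z ℓ j) = 1 := by
  rw [vanishingFactor, eval_prod]
  refine prod_eq_one fun r hr => ?_
  have hne : z j ≠ z r := fun h => by
    simpa [h, hζ.not_ge] using hsep j r (mem_erase.1 hr).1.symm
  rw [eval_pow, eval_nodeFactor_self hne, one_pow]

lemma weightedNorm_taylor_vanishingFactor_le (j : ι) :
    weightedNorm ζ (taylor (z j) (vanishingFactor z ℓ j))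
      ≤ 2 ^ ∑ r ∈ univ.erase j, (ℓ r + 1) := by
  have htaylor : taylor (z j) (vanishingFactor z ℓ j)
      = ∏ r ∈ univ.erase j, taylor (z j) (nodeFactor (z j) (z r)) ^ (ℓ r + 1) := by
    simp only [vanishingFactor, taylor_apply, Polynomial.prod_comp, pow_comp]
  rw [htaylor]
  exact weightedNorm_prod_pow_le hζ.le _ _ _ fun r hr =>
    weightedNorm_taylor_nodeFactor_le hζ (hsep j r (mem_erase.1 hr).1.symm)

variable (hz : ∀ r, ‖z r‖ = 1)
include hz

lemma weightedNorm_one_vanishingFactor_le (j : ι) :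
    weightedNorm 1 (vanishingFactor z ℓ j) ≤ (2 * ζ⁻¹) ^ ∑ r ∈ univ.erase j, (ℓ r + 1) :=
  weightedNorm_prod_pow_le zero_le_one _ _ _ fun r hr =>
    weightedNorm_one_nodeFactor_le (hz r) hζ (hsep j r (mem_erase.1 hr).1.symm)

lemma norm_eulerMoment_self (j : ι) (i : ℕ) : ‖eulerMoment z ℓ j i i‖ = i ! := by
  rw [eulerMoment, eval_eulerOp_pow_X_sub_C_pow_mul, eval_vanishingFactor_self hζ hsep, mul_one,
    norm_mul, norm_pow, hz, one_pow, one_mul, Complex.norm_natCast]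

lemma sum_hermiteCoeff_mul_eulerMoment (j : ι) (k m : ℕ) :
    ∑ x ∈ range (m + 1), hermiteCoeff z ℓ j k x * eulerMoment z ℓ j m x
      = if m = k then 1 else 0 :=
  sum_forwardSubst_mul _ _ <| norm_ne_zero_iff.1 <| by
    rw [norm_eulerMoment_self hζ hsep hz]
    exact_mod_cast m.factorial_ne_zero

lemma eval_eulerOp_pow_hermiteInterpolant_self (j : ι) (k : ℕ) {m : ℕ} (hm : m ≤ ℓ j) :
    eval (z j) ((eulerOp ^ m) (hermiteInterpolant z ℓ j k)) = if m = k then 1 else 0 := by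
  have hexpand : eval (z j) ((eulerOp ^ m) (hermiteInterpolant z ℓ j k))
      = ∑ i ∈ range (ℓ j + 1), hermiteCoeff z ℓ j k i * eulerMoment z ℓ j m i := by
    simp only [hermiteInterpolant, sum_mul, mul_assoc]
    simp only [← smul_eq_C_mul, map_sum, map_smul, eval_finsetSum, eval_smul, smul_eq_mul,
      eulerMoment]
  rw [hexpand, ← sum_range_add_sum_Ico _ (show m + 1 ≤ ℓ j + 1 by omega),
    sum_eq_zero (s := Ico (m + 1) (ℓ j + 1)) fun i hi => by
    rw [eulerMoment_eq_zero_of_lt (mem_Ico.1 hi).1, mul_zero], add_zero]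
  exact sum_hermiteCoeff_mul_eulerMoment hζ hsep hz j k m

lemma eval_eulerOp_pow_hermiteInterpolant (σ τ : (j : ι) × Fin (ℓ j + 1)) :
    eval (z τ.1) ((eulerOp ^ (τ.2 : ℕ)) (hermiteInterpolant z ℓ σ.1 σ.2))
      = if τ = σ then 1 else 0 := by
  obtain ⟨j, k⟩ := σ
  obtain ⟨r, t⟩ := τ
  by_cases hr : r = j
  · subst hr
    rw [eval_eulerOp_pow_hermiteInterpolant_self hζ hsep hz _ _ t.is_le]
    simp [Fin.val_inj]
  · rw [eval_eulerOp_pow_hermiteInterpolant_of_ne hr _ t.is_le,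
      if_neg fun h => hr (congrArg Sigma.fst h)]

variable {R : ℕ} (hR : R = ∑ r, (ℓ r + 1)) (hζR : ζ < 2 * R)
include hR hζR

lemma norm_eulerMoment_le {j : ι} {m i : ℕ} (hi : i ≤ m) (hm : m ≤ ℓ j) :
    ‖eulerMoment z ℓ j m i‖ ≤ momentBound R * ζ⁻¹ ^ (m - i) := by
  have hsplit := add_sum_erase univ (fun r => ℓ r + 1) (mem_univ j)
  rw [← hR] at hsplit
  set n := ∑ r ∈ univ.erase j, (ℓ r + 1)
  have hdeg : ((X - C (z j)) ^ i * vanishingFactor z ℓ j).natDegree ≤ R := by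
    refine natDegree_mul_le.trans ?_
    have := natDegree_vanishingFactor_le (z := z) (ℓ := ℓ) j
    simp only [natDegree_pow, natDegree_X_sub_C, mul_one]
    omega
  have htaylor : weightedNorm ζ (taylor (z j) ((X - C (z j)) ^ i * vanishingFactor z ℓ j))
      ≤ ζ ^ i * 2 ^ R := by
    rw [taylor_mul, taylor_pow, map_sub, taylor_X, taylor_C, add_sub_cancel_right,
      X_pow_eq_monomial]
    refine (weightedNorm_mul_le hζ.le _ _).trans ?_
    rw [weightedNorm_monomial, norm_one, one_mul]
    gcongr
    exact (weightedNorm_taylor_vanishingFactor_le hζ hsep j).trans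
      (pow_le_pow_right₀ one_le_two (by omega))
  have hpow : ζ ^ i * ζ⁻¹ ^ m = ζ⁻¹ ^ (m - i) := by
    rw [← Nat.sub_add_cancel hi, pow_add, Nat.add_sub_cancel, mul_left_comm, ← mul_pow,
      mul_inv_cancel₀ hζ.ne', one_pow, mul_one]
  have hbase : (ζ + 1) * R ≤ (2 * R + 1) ^ 2 := by
    have : (0 : ℝ) ≤ R := R.cast_nonneg
    nlinarith
  calc ‖eulerMoment z ℓ j m i‖ ≤ ((ζ + ‖z j‖) * R / ζ) ^ m * (ζ ^ i * 2 ^ R) :=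
        (norm_eval_eulerOp_pow_le hζ _ hdeg m).trans (by gcongr)
    _ = ((ζ + 1) * R) ^ m * 2 ^ R * (ζ ^ i * ζ⁻¹ ^ m) := by
        rw [hz, div_eq_mul_inv, mul_pow]
        ring
    _ ≤ ((2 * R + 1) ^ 2) ^ R * 2 ^ R * ζ⁻¹ ^ (m - i) := by
        rw [hpow]
        gcongr
        calc ((ζ + 1) * R) ^ m ≤ ((2 * R + 1) ^ 2) ^ m := by gcongr
          _ ≤ ((2 * R + 1) ^ 2) ^ R :=
            pow_le_pow_right₀ (one_le_pow₀ (by linarith [R.cast_nonneg (α := ℝ)])) (by omega)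

lemma norm_hermiteCoeff_le {j : ι} (k : ℕ) {i : ℕ} (hi : i ≤ ℓ j) :
    ‖hermiteCoeff z ℓ j k i‖ ≤ ((momentBound R + 1) * ζ⁻¹) ^ (i - k) :=
  norm_le_of_sum_mul_eq_ite (N := ℓ j + 1) (by unfold momentBound; positivity) (by positivity)
    (fun m _ => by
      rw [norm_eulerMoment_self hζ hsep hz]
      exact Nat.one_le_cast.2 m.factorial_pos)
    (fun m hm x hx => norm_eulerMoment_le hζ hsep hz hR hζR hx.le (Nat.lt_succ_iff.1 hm))
    (fun m _ => sum_hermiteCoeff_mul_eulerMoment hζ hsep hz j k m) i (Nat.lt_succ_of_le hi)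

lemma weightedNorm_one_C_hermiteCoeff_mul_le {j : ι} {k i : ℕ} (hk : k ≤ ℓ j) (hi : i ≤ ℓ j) :
    weightedNorm 1 (C (hermiteCoeff z ℓ j k i) * (X - C (z j)) ^ i) * (2 * ζ⁻¹) ^ (R - (ℓ j + 1))
      ≤ (momentBound R + 1) ^ R * (2 * (2 * R + 1)) ^ R * ζ⁻¹ ^ (R - k) := by
  have hjR : ℓ j + 1 ≤ R := hR ▸ single_le_sum (fun r _ => (ℓ r).succ_pos.le) (mem_univ j)
  set E := momentBound R + 1
  have hE : 1 ≤ E := le_add_of_nonneg_left (by unfold momentBound; positivity)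
  have hq : 1 ≤ (2 * R + 1) * ζ⁻¹ := by
    rw [← div_eq_mul_inv, one_le_div hζ]
    linarith
  have hX : weightedNorm 1 ((X - C (z j)) ^ i) ≤ 2 ^ i :=
    (weightedNorm_pow_le zero_le_one _ _).trans (pow_le_pow_left₀
      (weightedNorm_nonneg zero_le_one _)
      ((weightedNorm_X_sub_C_le zero_le_one _).trans (by rw [hz]; norm_num)) _)
  have hcoeff := norm_hermiteCoeff_le hζ hsep hz hR hζR k hi
  have hterm : weightedNorm 1 (C (hermiteCoeff z ℓ j k i) * (X - C (z j)) ^ i)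
      ≤ (E * ζ⁻¹) ^ (i - k) * 2 ^ i :=
    (weightedNorm_C_mul_le zero_le_one _ _).trans
      (mul_le_mul hcoeff hX (weightedNorm_nonneg zero_le_one _) ((norm_nonneg _).trans hcoeff))
  have hE' : E ^ (i - k) ≤ E ^ R := pow_le_pow_right₀ hE (by omega)
  have h2 : (2 : ℝ) ^ (i + (R - (ℓ j + 1))) ≤ 2 ^ R := pow_le_pow_right₀ one_le_two (by omega)
  have hζ' : ζ⁻¹ ^ (i - k + (R - (ℓ j + 1))) ≤ (2 * R + 1) ^ R * ζ⁻¹ ^ (R - k) :=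
    (pow_le_pow_mul_pow_of_one_le_mul (by positivity) hq (by omega)).trans
      (mul_le_mul_of_nonneg_right (pow_le_pow_right₀ (by linarith) (by omega)) (by positivity))
  calc _ ≤ ((E * ζ⁻¹) ^ (i - k) * 2 ^ i) * (2 * ζ⁻¹) ^ (R - (ℓ j + 1)) :=
        mul_le_mul_of_nonneg_right hterm (by positivity)
    _ = E ^ (i - k) * 2 ^ (i + (R - (ℓ j + 1))) * ζ⁻¹ ^ (i - k + (R - (ℓ j + 1))) := by
        rw [mul_pow, mul_pow]
        ring
    _ ≤ E ^ R * 2 ^ R * ((2 * R + 1) ^ R * ζ⁻¹ ^ (R - k)) := by gcongr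
    _ = E ^ R * (2 * (2 * R + 1)) ^ R * ζ⁻¹ ^ (R - k) := by
        rw [mul_pow]
        ring

lemma weightedNorm_one_hermiteInterpolant_le {j : ι} {k : ℕ} (hk : k ≤ ℓ j) :
    weightedNorm 1 (hermiteInterpolant z ℓ j k) ≤ interpolantBound R * ζ⁻¹ ^ (R - k) := by
  have hsplit := add_sum_erase univ (fun r => ℓ r + 1) (mem_univ j)
  rw [← hR] at hsplit
  have hB := weightedNorm_one_vanishingFactor_le (ℓ := ℓ) hζ hsep hz j
  rw [show ∑ r ∈ univ.erase j, (ℓ r + 1) = R - (ℓ j + 1) by omega] at hB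
  calc weightedNorm 1 (hermiteInterpolant z ℓ j k)
      ≤ (∑ i ∈ range (ℓ j + 1), weightedNorm 1 (C (hermiteCoeff z ℓ j k i) * (X - C (z j)) ^ i))
          * (2 * ζ⁻¹) ^ (R - (ℓ j + 1)) :=
        (weightedNorm_mul_le zero_le_one _ _).trans (mul_le_mul
          (weightedNorm_sum_le zero_le_one _ _) hB (weightedNorm_nonneg zero_le_one _)
          (sum_nonneg fun _ _ => weightedNorm_nonneg zero_le_one _))
    _ ≤ ∑ _i ∈ range (ℓ j + 1),
          (momentBound R + 1) ^ R * (2 * (2 * R + 1)) ^ R * ζ⁻¹ ^ (R - k) := by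
        rw [sum_mul]
        exact sum_le_sum fun i hi => weightedNorm_one_C_hermiteCoeff_mul_le hζ hsep hz hR hζR hk
          (Nat.lt_succ_iff.1 (mem_range.1 hi))
    _ ≤ interpolantBound R * ζ⁻¹ ^ (R - k) := by
        rw [sum_const, card_range, nsmul_eq_mul, interpolantBound, mul_assoc ((R : ℝ) + 1),
          mul_assoc ((R : ℝ) + 1)]
        refine mul_le_mul_of_nonneg_right (by exact_mod_cast (show ℓ j + 1 ≤ R + 1 by omega)) ?_
        unfold momentBound
        positivity

end Separated

end HermiteInterpolant

theorem prony_pascal_vandermonde_inverse_rows (K : ℕ) (ℓ : Fin K → ℕ) (R : ℕ)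
    (hR : R = ∑ j, (ℓ j + 1)) :
    ∃ C : ℝ, 0 < C ∧
      ∀ (z : Fin K → ℂ), (∀ j, ‖z j‖ = 1) → Function.Injective z →
      ∀ ζ : ℝ, 0 < ζ → ζ < 2 * R →
      (∀ r s : Fin K, r ≠ s → ζ ≤ ‖z r - z s‖) →
      ∀ (e : ((j : Fin K) × Fin (ℓ j + 1)) ≃ Fin R)
        (V : Matrix (Fin R) (Fin R) ℂ),
      (∀ (k : Fin R) (c : Fin R),
        V k c = z (e.symm c).1 ^ (k : ℕ) * ((k : ℕ) : ℂ) ^ (((e.symm c).2 : ℕ))) →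
      ∀ (j : Fin K) (k : Fin (ℓ j + 1)),
        ∑ s : Fin R, ‖V⁻¹ (e ⟨j, k⟩) s‖ ≤ C * (1 / ζ) ^ (R - (k : ℕ)) := by
  refine ⟨interpolantBound R, by unfold interpolantBound momentBound; positivity, ?_⟩
  intro z hz _ ζ hζ hζR hsep e V hV j k
  set Q : ((j : Fin K) × Fin (ℓ j + 1)) → ℂ[X] := fun σ => hermiteInterpolant z ℓ σ.1 σ.2
  have hdeg : ∀ σ, (Q σ).natDegree < R := fun σ => natDegree_hermiteInterpolant_lt hR _ _
  have hinv : V⁻¹ = Matrix.of fun r (s : Fin R) => (Q (e.symm r)).coeff s :=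
    Matrix.inv_eq_left_inv <| coeff_mul_pascalVandermonde_eq_one e (fun σ => z σ.1)
      (fun σ => σ.2) hV hdeg (eval_eulerOp_pow_hermiteInterpolant hζ hsep hz)
  calc ∑ s : Fin R, ‖V⁻¹ (e ⟨j, k⟩) s‖ = weightedNorm 1 (Q ⟨j, k⟩) := by
        rw [weightedNorm_eq_sum_range (hdeg _), ← Fin.sum_univ_eq_sum_range, hinv]
        simp
    _ ≤ interpolantBound R * (1 / ζ) ^ (R - (k : ℕ)) := by
        rw [one_div]
        exact weightedNorm_one_hermiteInterpolant_le hζ hsep hz hR hζR k.is_le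
end
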